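/- arXiv:2605.03601 — 6 statements merged into one kernel-verified Lean document; each statement's English description precedes it below -/
import Mathlib

section
/- Let A = (n_0, ..., n_L, n_{L+1}) be an architecture with L >= 2, n_i >= 2 for all i in {0, ..., L+1}, and n_L >= 4. Then there exists a nonempty open subset U of Theta_A such that for every theta in U there is a continuous map gamma from an open neighborhood V of 0 in R^2 into Theta_A with gamma(0) = theta, f_{gamma(s)} = f_theta for all s in V, and gamma(s) not equivalent to gamma(s') whenever s, s' in V with s != s'; in particular the fiber of f_theta modulo the trivial symmetries is at least two-dimensional. -/
namespace ReLUNet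

open scoped BigOperators

/-- The parameter space of a fully connected ReLU network with architecture
`(n 0, n 1, ..., n (L+1))`.  The index `l : Fin (L+1)` stands for the layer
`l+1` of the paper, carrying a weight matrix `W^(l+1) ∈ ℝ^{n (l+1) × n l}`
and a bias vector `b^(l+1) ∈ ℝ^{n (l+1)}`. -/
abbrev ParamSpace (L : ℕ) (n : ℕ → ℕ) : Type :=
  (l : Fin (L + 1)) → ((Fin (n (l.1 + 1)) → Fin (n l.1) → ℝ) × (Fin (n (l.1 + 1)) → ℝ))

/-- The hidden activations: `hidden θ l x` is `h_l(x)`, with `h_0(x) = x` and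
`h_{l+1}(x) = ReLU (W^(l+1) h_l(x) + b^(l+1))`. -/
noncomputable def hidden {L : ℕ} {n : ℕ → ℕ} (θ : ParamSpace L n) :
    (l : ℕ) → (Fin (n 0) → ℝ) → Fin (n l) → ℝ
  | 0, x => x
  | l + 1, x =>
    if h : l < L + 1 then
      fun i => max ((∑ j, (θ ⟨l, h⟩).1 i j * hidden θ l x j) + (θ ⟨l, h⟩).2 i) 0
    else
      fun _ => 0

/-- The function realized by the parameter `θ`:
`f_θ(x) = W^(L+1) h_L(x) + b^(L+1)`. -/
noncomputable def realize {L : ℕ} {n : ℕ → ℕ} (θ : ParamSpace L n)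
    (x : Fin (n 0) → ℝ) : Fin (n (L + 1)) → ℝ :=
  fun p =>
    (∑ j, (θ ⟨L, Nat.lt_succ_self L⟩).1 p j * hidden θ L x j) +
      (θ ⟨L, Nat.lt_succ_self L⟩).2 p

/-- Equivalence of parameters modulo the trivial symmetries: permutations of the
neurons within each hidden layer and positive rescalings, with the identity
permutation and trivial scaling at the input layer `0` and output layer `L+1`. -/
def ParamEquiv {L : ℕ} {n : ℕ → ℕ} (η θ : ParamSpace L n) : Prop :=
  ∃ (σ : ∀ l : ℕ, Equiv.Perm (Fin (n l))) (lam : ∀ l : ℕ, Fin (n l) → ℝ),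
    (∀ l i, 0 < lam l i) ∧
    σ 0 = Equiv.refl _ ∧ σ (L + 1) = Equiv.refl _ ∧
    (∀ i, lam 0 i = 1) ∧ (∀ i, lam (L + 1) i = 1) ∧
    ∀ l : Fin (L + 1),
      (∀ i j, (η l).1 i j =
        lam (l.1 + 1) i * (θ l).1 (σ (l.1 + 1) i) (σ l.1 j) * (lam l.1 (σ l.1 j))⁻¹) ∧
      (∀ i, (η l).2 i = lam (l.1 + 1) i * (θ l).2 (σ (l.1 + 1) i))
lemma hidden_succ_eq {L : ℕ} {n : ℕ → ℕ} (θ : ParamSpace L n) (l : ℕ) (h : l < L + 1)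
    (x : Fin (n 0) → ℝ) :
    hidden θ (l+1) x = fun i =>
      max ((∑ j, (θ ⟨l, h⟩).1 i j * hidden θ l x j) + (θ ⟨l, h⟩).2 i) 0 := by
  simp only [hidden]
  rw [dif_pos h]

lemma hidden_succ_nonneg {L : ℕ} {n : ℕ → ℕ} (θ : ParamSpace L n) (l : ℕ)
    (x : Fin (n 0) → ℝ) (j : Fin (n (l+1))) : 0 ≤ hidden θ (l+1) x j := by
  simp only [hidden]
  split
  · exact le_max_right _ _
  · exact le_rfl

lemma hidden_congr {L : ℕ} {n : ℕ → ℕ} (θ η : ParamSpace L n) (x : Fin (n 0) → ℝ) :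
    ∀ l : ℕ, (∀ k : Fin (L+1), k.1 < l → θ k = η k) → hidden θ l x = hidden η l x := by
  intro l
  induction l with
  | zero => intro _; rfl
  | succ m ih =>
    intro h
    simp only [hidden]
    split
    · rename_i hm
      rw [ih (fun k hk => h k (Nat.lt_succ_of_lt hk)), h ⟨m, hm⟩ (Nat.lt_succ_self m)]
    · rfl

set_option maxHeartbeats 400000 in
/-- **Open set of parameters with at least two-dimensional fibers.**
For architectures with `L ≥ 2` hidden layers, all widths at least `2`, and last
hidden layer of width at least `4`, there is a nonempty open set `U` of
parameters such that through every `θ ∈ U` there passes a continuous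
two-parameter family of pairwise inequivalent parameters all realizing the same
function as `θ`. -/
theorem exists_open_two_dimensional_fiber (L : ℕ) (n : ℕ → ℕ)
    (hL : 2 ≤ L)
    (h2 : ∀ i, i ≤ L + 1 → 2 ≤ n i)
    (h4 : 4 ≤ n L) :
    ∃ U : Set (ParamSpace L n), U.Nonempty ∧ IsOpen U ∧
      ∀ θ ∈ U,
        ∃ (V : Set (ℝ × ℝ)) (γ : ℝ × ℝ → ParamSpace L n),
          IsOpen V ∧ (0 : ℝ × ℝ) ∈ V ∧ ContinuousOn γ V ∧
          γ 0 = θ ∧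
          (∀ s ∈ V, realize (γ s) = realize θ) ∧
          (∀ s ∈ V, ∀ s' ∈ V, s ≠ s' → ¬ ParamEquiv (γ s) (γ s')) := by
  obtain ⟨M, rfl⟩ : ∃ M, L = M + 2 := ⟨L - 2, by omega⟩
  clear hL
  have h4' : 4 ≤ n (M + 2) := h4
  have hout : 2 ≤ n (M + 2 + 1) := h2 (M + 2 + 1) le_rfl
  let lM : Fin (M + 2 + 1) := ⟨M + 1, by omega⟩
  let lL : Fin (M + 2 + 1) := ⟨M + 2, by omega⟩
  have hlMlL : lM ≠ lL := Fin.ne_of_val_ne (show M + 1 ≠ M + 2 by omega)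
  let i0 : Fin (n (M + 2)) := ⟨0, by omega⟩
  let i1 : Fin (n (M + 2)) := ⟨1, by omega⟩
  have hi01 : i0 ≠ i1 := Fin.ne_of_val_ne (show 0 ≠ 1 by omega)
  let p0 : Fin (n (M + 2 + 1)) := ⟨0, by omega⟩
  let p1 : Fin (n (M + 2 + 1)) := ⟨1, by omega⟩
  have hp01 : p0 ≠ p1 := Fin.ne_of_val_ne (show 0 ≠ 1 by omega)
  refine ⟨{θ : ParamSpace (M+2) n |
      (∀ j, 0 < (θ lM).1 i0 j) ∧ (∀ j, 0 < (θ lM).1 i1 j) ∧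
      0 < (θ lM).2 i0 ∧ 0 < (θ lM).2 i1 ∧
      (θ lL).1 p0 i0 * (θ lL).1 p1 i1 - (θ lL).1 p0 i1 * (θ lL).1 p1 i0 ≠ 0}, ?_, ?_, ?_⟩
  · -- nonempty
    refine ⟨Function.update (fun _ => (fun _ _ => (1:ℝ), fun _ => (1:ℝ))) lL
      ((fun p j => if p = p0 ∧ j = i1 then 0 else 1 : Fin (n (M+2+1)) → Fin (n (M+2)) → ℝ),
        fun _ => (1:ℝ)), ?_⟩
    have hMe : Function.update (fun _ => (fun _ _ => (1:ℝ), fun _ => (1:ℝ)) :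
        ParamSpace (M+2) n) lL
        ((fun p j => if p = p0 ∧ j = i1 then 0 else 1 : Fin (n (M+2+1)) → Fin (n (M+2)) → ℝ),
          fun _ => (1:ℝ)) lM = (fun _ _ => (1:ℝ), fun _ => (1:ℝ)) :=
      Function.update_of_ne hlMlL _ _
    refine ⟨?_, ?_, ?_, ?_, ?_⟩
    · intro j; rw [hMe]; norm_num
    · intro j; rw [hMe]; norm_num
    · rw [hMe]; norm_num
    · rw [hMe]; norm_num
    · rw [Function.update_self]
      norm_num [hi01, Ne.symm hp01]
  · -- open
    simp only [Set.setOf_and, Set.setOf_forall]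
    have cW : ∀ (l : Fin (M+2+1)) (i : Fin (n (l.1+1))) (j : Fin (n l.1)),
        Continuous fun θ : ParamSpace (M+2) n => (θ l).1 i j := fun l i j =>
      (continuous_apply j).comp ((continuous_apply i).comp (continuous_apply l).fst)
    have cB : ∀ (l : Fin (M+2+1)) (i : Fin (n (l.1+1))),
        Continuous fun θ : ParamSpace (M+2) n => (θ l).2 i := fun l i =>
      (continuous_apply i).comp (continuous_apply l).snd
    refine IsOpen.inter (isOpen_iInter_of_finite fun j => isOpen_lt continuous_const (cW lM i0 j))
      (IsOpen.inter (isOpen_iInter_of_finite fun j => isOpen_lt continuous_const (cW lM i1 j))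
      (IsOpen.inter (isOpen_lt continuous_const (cB lM i0))
      (IsOpen.inter (isOpen_lt continuous_const (cB lM i1)) ?_)))
    exact isOpen_compl_singleton.preimage
      ((((cW lL p0 i0).mul (cW lL p1 i1)).sub ((cW lL p0 i1).mul (cW lL p1 i0))))
  · -- the main property
    rintro θ ⟨hw0, hw1, hb0, hb1, hdet⟩
    let γ : ℝ × ℝ → ParamSpace (M+2) n := fun s =>
      Function.update (Function.update θ lL
          ((θ lL).1, fun p => (θ lL).2 p - (θ lL).1 p i0 * s.1 - (θ lL).1 p i1 * s.2)) lM
        ((θ lM).1, fun i => (θ lM).2 i +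
          (if i = i0 then s.1 else if i = i1 then s.2 else 0))
    have hγM : ∀ s, γ s lM = ((θ lM).1, fun i => (θ lM).2 i +
        (if i = i0 then s.1 else if i = i1 then s.2 else 0)) := fun s =>
      Function.update_self _ _ _
    have hγL : ∀ s, γ s lL = ((θ lL).1,
        fun p => (θ lL).2 p - (θ lL).1 p i0 * s.1 - (θ lL).1 p i1 * s.2) := by
      intro s
      show Function.update (Function.update θ lL
          ((θ lL).1, fun p => (θ lL).2 p - (θ lL).1 p i0 * s.1 - (θ lL).1 p i1 * s.2)) lM
        ((θ lM).1, fun i => (θ lM).2 i +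
          (if i = i0 then s.1 else if i = i1 then s.2 else 0)) lL = _
      rw [Function.update_of_ne hlMlL.symm, Function.update_self]
    have hγother : ∀ s (k : Fin (M+2+1)), k ≠ lM → k ≠ lL → γ s k = θ k := by
      intro s k h1 h2
      show Function.update (Function.update θ lL
          ((θ lL).1, fun p => (θ lL).2 p - (θ lL).1 p i0 * s.1 - (θ lL).1 p i1 * s.2)) lM
        ((θ lM).1, fun i => (θ lM).2 i +
          (if i = i0 then s.1 else if i = i1 then s.2 else 0)) k = θ k
      rw [Function.update_of_ne h1, Function.update_of_ne h2]
    refine ⟨Set.Ioo (-(θ lM).2 i0) ((θ lM).2 i0) ×ˢ Set.Ioo (-(θ lM).2 i1) ((θ lM).2 i1),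
      γ, (isOpen_Ioo.prod isOpen_Ioo), ?_, ?_, ?_, ?_, ?_⟩
    · simp only [Set.mem_prod, Set.mem_Ioo, Prod.fst_zero, Prod.snd_zero]
      exact ⟨⟨by linarith, hb0⟩, by linarith, hb1⟩
    · -- continuity
      refine Continuous.continuousOn ?_
      refine continuous_pi fun k => ?_
      by_cases h1 : k = lM
      · subst h1
        simp only [hγM]
        refine Continuous.prodMk continuous_const (continuous_pi fun i => ?_)
        by_cases hI : i = i0
        · simp only [hI, if_pos rfl]
          exact continuous_const.add continuous_fst
        · by_cases hI' : i = i1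
          · rw [show (fun s : ℝ × ℝ => (θ lM).2 i +
                (if i = i0 then s.1 else if i = i1 then s.2 else 0)) =
                (fun s : ℝ × ℝ => (θ lM).2 i + s.2) from by
              funext s; rw [if_neg hI, if_pos hI']]
            exact continuous_const.add continuous_snd
          · simp only [if_neg hI, if_neg hI']
            exact continuous_const.add continuous_const
      · by_cases h2' : k = lL
        · subst h2'
          simp only [hγL]
          refine Continuous.prodMk continuous_const (continuous_pi fun p => ?_)
          exact (continuous_const.sub (continuous_const.mul continuous_fst)).sub
            (continuous_const.mul continuous_snd)
        · simp only [hγother _ k h1 h2']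
          exact continuous_const
    · -- γ 0 = θ
      funext k
      by_cases h1 : k = lM
      · subst h1
        rw [hγM]
        have he : (fun i => (θ lM).2 i +
            (if i = i0 then (0 : ℝ × ℝ).1 else if i = i1 then (0 : ℝ × ℝ).2 else 0))
            = (θ lM).2 := by
          funext i
          split_ifs <;> simp
        rw [he]
      · by_cases h2' : k = lL
        · subst h2'
          rw [hγL]
          have he : (fun p => (θ lL).2 p - (θ lL).1 p i0 * (0 : ℝ × ℝ).1
              - (θ lL).1 p i1 * (0 : ℝ × ℝ).2) = (θ lL).2 := by
            funext p; simp
          rw [he]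
        · exact hγother 0 k h1 h2'
    · -- realize unchanged
      rintro s ⟨hs1, hs2⟩
      simp only [Set.mem_Ioo] at hs1 hs2
      funext x p
      have hlow : hidden (γ s) (M+1) x = hidden θ (M+1) x := by
        refine hidden_congr _ _ x (M+1) fun k hk =>
          hγother s k (Fin.ne_of_val_ne ?_) (Fin.ne_of_val_ne ?_)
        · show k.1 ≠ M + 1
          omega
        · show k.1 ≠ M + 2
          omega
      have hupper : ∀ j, hidden (γ s) (M+2) x j = hidden θ (M+2) x j +
          (if j = i0 then s.1 else if j = i1 then s.2 else 0) := by
        have hidden_eq : ∀ (η : ParamSpace (M+2) n) (y : Fin (n 0) → ℝ)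
            (i : Fin (n (M+2))), hidden η (M+2) y i =
            max ((∑ j', (η lM).1 i j' * hidden η (M+1) y j') + (η lM).2 i) 0 := fun η y i =>
          congrFun (hidden_succ_eq η (M+1) (Nat.lt_succ_of_lt (Nat.lt_succ_self _)) y) i
        intro j
        rw [hidden_eq (γ s) x j, hidden_eq θ x j, hγM s, hlow]
        dsimp only
        have hS0 : 0 ≤ ∑ j' : Fin (n (M+1)), (θ lM).1 i0 j' * hidden θ (M+1) x j' :=
          Finset.sum_nonneg fun j' _ => mul_nonneg (hw0 j').le (hidden_succ_nonneg θ M x j')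
        have hS1 : 0 ≤ ∑ j' : Fin (n (M+1)), (θ lM).1 i1 j' * hidden θ (M+1) x j' :=
          Finset.sum_nonneg fun j' _ => mul_nonneg (hw1 j').le (hidden_succ_nonneg θ M x j')
        have key : ∀ S b t : ℝ, 0 ≤ S → 0 < b → -b < t →
            (S + (b + t)) ⊔ 0 = (S + b) ⊔ 0 + t := by
          intro S b t hS hb ht
          rw [max_eq_left (by linarith), max_eq_left (by linarith)]
          ring
        by_cases hj0 : j = i0
        · subst hj0
          have h1 : (if i0 = i0 then s.1 else if i0 = i1 then s.2 else 0) = s.1 := if_pos rfl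
          simp only [h1]
          exact key _ _ _ hS0 hb0 hs1.1
        · by_cases hj1 : j = i1
          · subst hj1
            have h1 : (if i1 = i0 then s.1 else if i1 = i1 then s.2 else 0) = s.2 := by
              rw [if_neg hj0, if_pos rfl]
            simp only [h1]
            exact key _ _ _ hS1 hb1 hs2.1
          · have h1 : (if j = i0 then s.1 else if j = i1 then s.2 else 0) = 0 := by
              rw [if_neg hj0, if_neg hj1]
            simp only [h1]
            simp
      show (∑ j, ((γ s) lL).1 p j * hidden (γ s) (M+2) x j) + ((γ s) lL).2 p =
        (∑ j, (θ lL).1 p j * hidden θ (M+2) x j) + (θ lL).2 p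
      rw [hγL s]
      dsimp only
      have hsplit : ∀ j : Fin (n (M+2)), (θ lL).1 p j * hidden (γ s) (M+2) x j =
          (θ lL).1 p j * hidden θ (M+2) x j +
          ((if j = i0 then (θ lL).1 p i0 * s.1 else 0) +
           (if j = i1 then (θ lL).1 p i1 * s.2 else 0)) := by
        intro j
        rw [hupper j]
        by_cases hj0 : j = i0
        · subst hj0
          rw [if_pos rfl, if_pos rfl, if_neg hi01]
          ring
        · by_cases hj1 : j = i1
          · subst hj1
            rw [if_neg hj0, if_pos rfl, if_neg hj0, if_pos rfl]
            ring
          · rw [if_neg hj0, if_neg hj1, if_neg hj0, if_neg hj1]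
            ring
      rw [Finset.sum_congr rfl fun j _ => hsplit j, Finset.sum_add_distrib,
        Finset.sum_add_distrib, Finset.sum_ite_eq' Finset.univ i0
          (fun _ => (θ lL).1 p i0 * s.1),
        Finset.sum_ite_eq' Finset.univ i1 (fun _ => (θ lL).1 p i1 * s.2)]
      simp only [Finset.mem_univ, if_pos]
      ring
    · -- inequivalent
      rintro s hs s' hs' hne ⟨σ, lam, hpos, hσ0, hσL, hl0, hlL1, hmain⟩
      have e : ∀ q : Fin (n (M+2+1)), (γ s lL).2 q = lam (M+2+1) q *
          ((γ s' lL).2 ((σ (M+2+1)) q)) := fun q => (hmain lL).2 q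
      have e' : ∀ q : Fin (n (M+2+1)),
          (θ lL).2 q - (θ lL).1 q i0 * s.1 - (θ lL).1 q i1 * s.2 =
          (θ lL).2 q - (θ lL).1 q i0 * s'.1 - (θ lL).1 q i1 * s'.2 := by
        intro q
        have hq := e q
        rw [hσL, hlL1 q, hγL s, hγL s'] at hq
        simpa using hq
      have h1 : (θ lL).1 p0 i0 * (s.1 - s'.1) + (θ lL).1 p0 i1 * (s.2 - s'.2) = 0 := by
        have := e' p0; linarith [this]
      have h1' : (θ lL).1 p1 i0 * (s.1 - s'.1) + (θ lL).1 p1 i1 * (s.2 - s'.2) = 0 := by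
        have := e' p1; linarith [this]
      have hu : s.1 - s'.1 = 0 := by
        have h3 : ((θ lL).1 p0 i0 * (θ lL).1 p1 i1 - (θ lL).1 p0 i1 * (θ lL).1 p1 i0) *
            (s.1 - s'.1) = 0 := by
          linear_combination (θ lL).1 p1 i1 * h1 - (θ lL).1 p0 i1 * h1'
        rcases mul_eq_zero.mp h3 with h | h
        · exact absurd h hdet
        · exact h
      have hv : s.2 - s'.2 = 0 := by
        have h3 : ((θ lL).1 p0 i0 * (θ lL).1 p1 i1 - (θ lL).1 p0 i1 * (θ lL).1 p1 i0) *
            (s.2 - s'.2) = 0 := by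
          linear_combination (θ lL).1 p0 i0 * h1' - (θ lL).1 p1 i0 * h1
        rcases mul_eq_zero.mp h3 with h | h
        · exact absurd h hdet
        · exact h
      exact hne (Prod.ext_iff.mpr ⟨by linarith, by linarith⟩)

end ReLUNet
end

section
/- For any positive integers n_0, ..., n_{L+1}, the set of tuples of matrices (W^(1), ..., W^(L+1)), with W^(l) in R^{n_l x n_{l-1}}, that satisfy the generic rank conditions is open and dense in the product space prod_{l=1}^{L+1} R^{n_l x n_{l-1}}. -/
namespace ReLUNet

open scoped BigOperators

/-- A tuple of weight matrices for the architecture `(n 0, ..., n (L+1))`: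
the index `l : Fin (L+1)` stands for the matrix `W^(l+1) ∈ ℝ^{n (l+1) × n l}`. -/
abbrev WTuple (L : ℕ) (n : ℕ → ℕ) : Type :=
  (l : Fin (L + 1)) → (Fin (n (l.1 + 1)) → Fin (n l.1) → ℝ)

/-- Extension of a weight tuple to all of `ℕ` (zero above the top layer). -/
noncomputable def Wext {L : ℕ} {n : ℕ → ℕ} (W : WTuple L n) (l : ℕ) :
    Matrix (Fin (n (l + 1))) (Fin (n l)) ℝ :=
  if h : l < L + 1 then Matrix.of (W ⟨l, h⟩) else 0

/-- The masked matrix product `W^(b) D_{S (b-1)} W^(b-1) ⋯ D_{S (c+1)} W^(c+1)`,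
mapping layer-`c` vectors to layer-`b` vectors (in the paper's notation this is
`W^(b) D_{S_{b-1}} ⋯ D_{S_{c+1}} W^(c+1)`; for `b = c + 1` it is `W^(c+1)`). -/
noncomputable def chainP (n : ℕ → ℕ)
    (W : ∀ l : ℕ, Matrix (Fin (n (l + 1))) (Fin (n l)) ℝ)
    (S : ∀ l : ℕ, Set (Fin (n l))) (c : ℕ) :
    (b : ℕ) → Matrix (Fin (n b)) (Fin (n c)) ℝ
  | 0 => 0
  | b + 1 =>
    if h : b = c then
      Matrix.of fun i j => W b i (finCongr (congrArg n h.symm) j)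
    else
      W b * Matrix.diagonal (fun i => Set.indicator (S b) (fun _ => (1 : ℝ)) i) *
        chainP n W S c b

/-- The generic rank conditions: every masked product
`W^(b) D_{S (b-1)} ⋯ D_{S (c+1)} W^(c+1)` (for `0 ≤ c < b ≤ L + 1`) attains the
maximal possible rank `min (n c) (min (n b) (min_{c < i < b} |S i|))`.  The
minimum is computed in `ℕ∞` so that the case `b = c + 1` (an empty collection of
selection sets) yields `min (n c) (n b)`. -/
def GenericRankCond (L : ℕ) (n : ℕ → ℕ)
    (W : ∀ l : ℕ, Matrix (Fin (n (l + 1))) (Fin (n l)) ℝ) : Prop :=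
  ∀ c b : ℕ, c < b → b ≤ L + 1 → ∀ S : ∀ l : ℕ, Finset (Fin (n l)),
    ((chainP n W (fun l => ↑(S l)) c b).rank : ℕ∞) =
      min (n c : ℕ∞) (min (n b : ℕ∞)
        ((Finset.Icc (c + 1) (b - 1)).inf fun i => ((S i).card : ℕ∞)))

end ReLUNet

/-!
Each rank condition, for fixed `c < b` and selection sets `S`, says that the masked product has
rank at least `r = min (n c) (n b) (min |S i|)` (the reverse inequality always holds), i.e. that
some `r × r` minor of it is nonzero. Minors are polynomial, hence analytic, in the weights, so
each condition defines an open set, and a dense one as soon as it is nonempty: an analytic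
function vanishing on an open set vanishes identically. It is nonempty because, for matrices
`E_l` selecting `r` coordinates of layer `l` (inside `S l` for `c < l < b`), the weights
`W^(l+1) = E_(l+1) E_lᵀ` make the product telescope to `E_b E_cᵀ`, of rank `r`. Finally the
condition only depends on `S` through the layers `c < i < b`, so only finitely many distinct
sets are intersected.
-/

open Matrix

namespace Matrix

variable {m n K : Type*} [Fintype m] [Fintype n] [Field K]

theorem exists_linearIndependent_row_submatrix_of_le_rank (A : Matrix m n K) {r : ℕ}
    (hr : r ≤ A.rank) : ∃ f : Fin r → m, LinearIndependent K (A.submatrix f id).row := by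
  obtain ⟨κ, a, ha, hspan, hli⟩ := exists_linearIndependent' K A.row
  have : Fintype κ := Fintype.ofInjective a ha
  have hcard : Fintype.card κ = A.rank := by
    rw [rank_eq_finrank_span_row, ← hspan, finrank_span_eq_card hli]
  obtain ⟨e⟩ : Nonempty (Fin r ↪ κ) :=
    Function.Embedding.nonempty_of_card_le (by simpa [hcard] using hr)
  exact ⟨a ∘ e, hli.comp e e.injective⟩

theorem le_rank_iff_exists_det_submatrix_ne_zero [DecidableEq m] [DecidableEq n]
    (A : Matrix m n K) (r : ℕ) :
    r ≤ A.rank ↔ ∃ (f : Fin r → m) (g : Fin r → n), (A.submatrix f g).det ≠ 0 := by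
  constructor
  · intro hr
    obtain ⟨f, hf⟩ := A.exists_linearIndependent_row_submatrix_of_le_rank hr
    have hrank : (A.submatrix f id)ᵀ.rank = r := by
      rw [rank_transpose, hf.rank_matrix, Fintype.card_fin]
    obtain ⟨g, hg⟩ :=
      (A.submatrix f id)ᵀ.exists_linearIndependent_row_submatrix_of_le_rank hrank.ge
    refine ⟨f, g, fun h => ?_⟩
    rw [← det_transpose] at h
    exact (isUnit_iff_isUnit_det _).mp (linearIndependent_rows_iff_isUnit.mp hg) |>.ne_zero h
  · rintro ⟨f, g, h⟩
    simpa [rank_of_det_ne_zero h] using A.rank_submatrix_le f g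

theorem isOpen_setOf_le_rank [TopologicalSpace K] [IsTopologicalRing K] [T1Space K]
    {X : Type*} [TopologicalSpace X] {A : X → Matrix m n K} (hA : Continuous A) (r : ℕ) :
    IsOpen {x | r ≤ (A x).rank} := by
  classical
  simp_rw [le_rank_iff_exists_det_submatrix_ne_zero, Set.ofPred_exists]
  exact isOpen_iUnion fun f => isOpen_iUnion fun g =>
    isOpen_compl_singleton.preimage (hA.matrix_submatrix f g).matrix_det

theorem rank_diagonal_indicator_one [DecidableEq m] (T : Finset m) :
    (diagonal fun i => Set.indicator (↑T : Set m) (fun _ => (1 : K)) i).rank = T.card := by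
  classical
  rw [rank_diagonal, ← Fintype.card_coe T]
  exact Fintype.card_congr (Equiv.subtypeEquivRight fun i => by simp [Set.indicator_apply])

theorem exists_transpose_mul_diagonal_indicator_mul_eq_one [DecidableEq m] (T : Finset m) {r : ℕ}
    (hr : r ≤ T.card) : ∃ E : Matrix m (Fin r) K,
      Eᵀ * diagonal (fun i => Set.indicator (↑T : Set m) (fun _ => (1 : K)) i) * E = 1 := by
  obtain ⟨ψ⟩ : Nonempty (Fin r ↪ T) :=
    Function.Embedding.nonempty_of_card_le (by simpa using hr)
  have hψ : Function.Injective fun k => (ψ k : m) := Subtype.val_injective.comp ψ.injective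
  refine ⟨(1 : Matrix m m K).submatrix (Equiv.refl m) (fun k => ψ k), ?_⟩
  rw [transpose_submatrix, transpose_one, one_submatrix_mul, mul_submatrix_one]
  ext k k'
  simp [diagonal_apply, one_apply, hψ.eq_iff]

end Matrix

section Analytic

variable {𝕜 E F : Type*} [NontriviallyNormedField 𝕜] [NormedAddCommGroup E] [NormedSpace 𝕜 E]
  [NormedAddCommGroup F] [NormedSpace 𝕜 F] {s : Set E} {l m n : Type*} [Fintype m]

theorem AnalyticOnNhd.dense_setOf_ne_zero [PreconnectedSpace E] {φ : E → F}
    (hφ : AnalyticOnNhd 𝕜 φ Set.univ) {x₀ : E} (hx₀ : φ x₀ ≠ 0) : Dense {x | φ x ≠ 0} := by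
  have : interior {x | φ x = 0} = ∅ := by
    refine Set.eq_empty_of_forall_notMem fun x hx => hx₀ ?_
    exact congrFun (hφ.eq_of_eventuallyEq analyticOnNhd_const (mem_interior_iff_mem_nhds.mp hx)) x₀
  simpa only [Set.compl_ofPred] using interior_eq_empty_iff_dense_compl.mp this

theorem analyticOnNhd_matrix_mul_apply {A : E → Matrix l m 𝕜} {B : E → Matrix m n 𝕜}
    (hA : ∀ i j, AnalyticOnNhd 𝕜 (fun x => A x i j) s)
    (hB : ∀ i j, AnalyticOnNhd 𝕜 (fun x => B x i j) s) (i : l) (j : n) :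
    AnalyticOnNhd 𝕜 (fun x => (A x * B x) i j) s := by
  simp only [mul_apply]
  exact Finset.analyticOnNhd_fun_sum _ fun k _ => (hA i k).mul (hB k j)

theorem analyticOnNhd_matrix_det [Fintype n] [DecidableEq n] {A : E → Matrix n n 𝕜}
    (hA : ∀ i j, AnalyticOnNhd 𝕜 (fun x => A x i j) s) :
    AnalyticOnNhd 𝕜 (fun x => (A x).det) s := by
  simp only [det_apply']
  exact Finset.analyticOnNhd_fun_sum _ fun σ _ =>
    analyticOnNhd_const.mul (Finset.analyticOnNhd_fun_prod _ fun i _ => hA _ _)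

theorem Matrix.dense_setOf_le_rank_of_analyticOnNhd [Fintype n] [PreconnectedSpace E]
    {A : E → Matrix m n 𝕜}
    (hA : ∀ i j, AnalyticOnNhd 𝕜 (fun x => A x i j) Set.univ) {x₀ : E} {r : ℕ}
    (hx₀ : r ≤ (A x₀).rank) : Dense {x | r ≤ (A x).rank} := by
  classical
  obtain ⟨f, g, hfg⟩ := (le_rank_iff_exists_det_submatrix_ne_zero _ r).mp hx₀
  refine (AnalyticOnNhd.dense_setOf_ne_zero
    (analyticOnNhd_matrix_det fun i j => hA (f i) (g j)) hfg).mono fun x hx => ?_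
  exact (le_rank_iff_exists_det_submatrix_ne_zero _ r).mpr ⟨f, g, hx⟩

end Analytic

theorem isOpen_and_dense_iInter_of_finite_range {X ι : Type*} [TopologicalSpace X]
    {s : ι → Set X} (hfin : (Set.range s).Finite) (ho : ∀ i, IsOpen (s i))
    (hd : ∀ i, Dense (s i)) :
    IsOpen (⋂ i, s i) ∧ Dense (⋂ i, s i) := by
  rw [← Set.sInter_range]
  exact ⟨hfin.isOpen_sInter (Set.forall_mem_range.2 ho),
    hfin.dense_sInter (Set.forall_mem_range.2 ho) (Set.forall_mem_range.2 hd)⟩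

namespace ReLUNet

section

variable {n : ℕ → ℕ}

theorem chainP_succ_self (W : ∀ l : ℕ, Matrix (Fin (n (l + 1))) (Fin (n l)) ℝ)
    (S : ∀ l : ℕ, Set (Fin (n l))) (c : ℕ) : chainP n W S c (c + 1) = W c := by
  rw [chainP, dif_pos rfl]
  rfl

theorem chainP_succ_of_ne (W : ∀ l : ℕ, Matrix (Fin (n (l + 1))) (Fin (n l)) ℝ)
    (S : ∀ l : ℕ, Set (Fin (n l))) {c b : ℕ} (hb : b ≠ c) :
    chainP n W S c (b + 1) =
      W b * diagonal (fun i => Set.indicator (S b) (fun _ => (1 : ℝ)) i) * chainP n W S c b :=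
  dif_neg hb

theorem chainP_congr {W : ∀ l : ℕ, Matrix (Fin (n (l + 1))) (Fin (n l)) ℝ}
    {S S' : ∀ l : ℕ, Set (Fin (n l))} {c b : ℕ} (hcb : c < b)
    (hS : ∀ l, c < l → l < b → S l = S' l) : chainP n W S c b = chainP n W S' c b := by
  induction b, hcb using Nat.le_induction with
  | base => rw [chainP_succ_self, chainP_succ_self]
  | succ b hcb ih =>
    rw [chainP_succ_of_ne _ _ (by omega), chainP_succ_of_ne _ _ (by omega),
      hS b hcb (by omega), ih fun l h1 h2 => hS l h1 (by omega)]

theorem rank_chainP_le_card (W : ∀ l : ℕ, Matrix (Fin (n (l + 1))) (Fin (n l)) ℝ)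
    (S : ∀ l : ℕ, Finset (Fin (n l))) {c i b : ℕ} (hci : c < i) (hib : i < b) :
    (chainP n W (fun l => ↑(S l)) c b).rank ≤ (S i).card := by
  induction b, hib using Nat.le_induction with
  | base =>
    rw [chainP_succ_of_ne _ _ (by omega), ← rank_diagonal_indicator_one (K := ℝ) (S i)]
    exact (rank_mul_le_left _ _).trans (rank_mul_le_right _ _)
  | succ b hib ih =>
    rw [chainP_succ_of_ne _ _ (by omega)]
    exact (rank_mul_le_right _ _).trans ih

theorem analyticOnNhd_chainP_apply {E : Type*} [NormedAddCommGroup E] [NormedSpace ℝ E]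
    {s : Set E} {W : E → ∀ l : ℕ, Matrix (Fin (n (l + 1))) (Fin (n l)) ℝ}
    (hW : ∀ l i j, AnalyticOnNhd ℝ (fun x => W x l i j) s) (S : ∀ l : ℕ, Set (Fin (n l)))
    (c b : ℕ) : ∀ i j, AnalyticOnNhd ℝ (fun x => chainP n (W x) S c b i j) s := by
  induction b with
  | zero => exact fun _ _ => analyticOnNhd_const
  | succ b ih =>
    by_cases hb : b = c
    · subst hb
      simpa only [chainP_succ_self] using hW b
    · simp only [chainP_succ_of_ne _ _ hb]
      exact analyticOnNhd_matrix_mul_apply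
        (analyticOnNhd_matrix_mul_apply (hW b) fun _ _ => analyticOnNhd_const) ih

theorem chainP_eq_mul_transpose {r : ℕ} (W : ∀ l : ℕ, Matrix (Fin (n (l + 1))) (Fin (n l)) ℝ)
    (S : ∀ l : ℕ, Set (Fin (n l))) (E : ∀ l : ℕ, Matrix (Fin (n l)) (Fin r) ℝ) {c b : ℕ}
    (hcb : c < b) (hW : ∀ l, c ≤ l → l < b → W l = E (l + 1) * (E l)ᵀ)
    (hE : ∀ l, c < l → l < b →
      (E l)ᵀ * diagonal (fun i => Set.indicator (S l) (fun _ => (1 : ℝ)) i) * E l = 1) :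
    chainP n W S c b = E b * (E c)ᵀ := by
  induction b, hcb using Nat.le_induction with
  | base => rw [chainP_succ_self, hW c le_rfl (by omega)]
  | succ b hcb ih =>
    rw [chainP_succ_of_ne _ _ (by omega), hW b (by omega) (by omega),
      ih (fun l h1 h2 => hW l h1 (by omega)) (fun l h1 h2 => hE l h1 (by omega))]
    simp only [← Matrix.mul_assoc]
    rw [Matrix.mul_assoc (E (b + 1)), Matrix.mul_assoc (E (b + 1)), hE b hcb (by omega),
      Matrix.mul_one]

noncomputable def rankBound (n : ℕ → ℕ) (S : ∀ l : ℕ, Finset (Fin (n l))) (c b : ℕ) : ℕ∞ :=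
  min (n c : ℕ∞) (min (n b : ℕ∞) ((Finset.Icc (c + 1) (b - 1)).inf fun i => ((S i).card : ℕ∞)))

theorem rankBound_ne_top (S : ∀ l : ℕ, Finset (Fin (n l))) (c b : ℕ) : rankBound n S c b ≠ ⊤ :=
  ne_top_of_le_ne_top (ENat.natCast_ne_top (n c)) (min_le_left _ _)

theorem rankBound_congr {S S' : ∀ l : ℕ, Finset (Fin (n l))} {c b : ℕ}
    (hS : ∀ l, c < l → l < b → S l = S' l) : rankBound n S c b = rankBound n S' c b := by
  refine congrArg _ (congrArg _ (Finset.inf_congr rfl fun i hi => ?_))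
  rw [Finset.mem_Icc] at hi
  rw [hS i (by omega) (by omega)]

theorem rank_chainP_le_rankBound (W : ∀ l : ℕ, Matrix (Fin (n (l + 1))) (Fin (n l)) ℝ)
    (S : ∀ l : ℕ, Finset (Fin (n l))) {c b : ℕ} (hcb : c < b) :
    ((chainP n W (fun l => ↑(S l)) c b).rank : ℕ∞) ≤ rankBound n S c b := by
  refine le_min (by exact_mod_cast rank_le_width _)
    (le_min (by exact_mod_cast rank_le_height _) (Finset.le_inf fun i hi => ?_))
  rw [Finset.mem_Icc] at hi
  exact_mod_cast rank_chainP_le_card W S (by omega) (by omega)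

theorem rank_chainP_eq_rankBound_iff (W : ∀ l : ℕ, Matrix (Fin (n (l + 1))) (Fin (n l)) ℝ)
    (S : ∀ l : ℕ, Finset (Fin (n l))) {c b : ℕ} (hcb : c < b) :
    ((chainP n W (fun l => ↑(S l)) c b).rank : ℕ∞) = rankBound n S c b ↔
      rankBound n S c b ≤ (chainP n W (fun l => ↑(S l)) c b).rank :=
  ⟨fun h => h.ge, fun h => le_antisymm (rank_chainP_le_rankBound W S hcb) h⟩

theorem analyticOnNhd_Wext_apply (L l : ℕ) (i : Fin (n (l + 1))) (j : Fin (n l)) :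
    AnalyticOnNhd ℝ (fun W : WTuple L n => Wext W l i j) Set.univ := by
  by_cases h : l < L + 1
  · simp only [Wext, dif_pos h]
    exact (ContinuousLinearMap.proj j ∘L ContinuousLinearMap.proj i ∘L
      ContinuousLinearMap.proj (R := ℝ)
        (φ := fun l : Fin (L + 1) => Fin (n (l + 1)) → Fin (n l) → ℝ) ⟨l, h⟩).analyticOnNhd _
  · simp only [Wext, dif_neg h]
    exact analyticOnNhd_const

theorem exists_le_rank_chainP {L : ℕ} (S : ∀ l : ℕ, Finset (Fin (n l))) {c b r : ℕ}
    (hcb : c < b) (hbL : b ≤ L + 1) (hr : (r : ℕ∞) ≤ rankBound n S c b) :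
    ∃ W : WTuple L n, r ≤ (chainP n (Wext W) (fun l => ↑(S l)) c b).rank := by
  simp only [rankBound, le_min_iff, Finset.le_inf_iff, Finset.mem_Icc, Nat.cast_le] at hr
  obtain ⟨hrc, hrb, hrS⟩ := hr
  have hE : ∀ l, ∃ E : Matrix (Fin (n l)) (Fin r) ℝ,
      (c < l → l < b →
        Eᵀ * diagonal (fun i => Set.indicator (↑(S l) : Set (Fin (n l))) (fun _ => (1 : ℝ)) i) *
          E = 1) ∧
      (l = c ∨ l = b → Eᵀ * E = 1) := by
    intro l
    by_cases hl : c < l ∧ l < b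
    · obtain ⟨E, hE⟩ := exists_transpose_mul_diagonal_indicator_mul_eq_one (K := ℝ) (S l)
        (hrS l ⟨by omega, by omega⟩)
      exact ⟨E, fun _ _ => hE, by omega⟩
    by_cases hl' : l = c ∨ l = b
    · obtain ⟨E, hE⟩ := exists_transpose_mul_diagonal_indicator_mul_eq_one (K := ℝ)
        (Finset.univ : Finset (Fin (n l))) (r := r) (by rcases hl' with rfl | rfl <;> simpa)
      simp only [Finset.coe_univ, Set.mem_univ, Set.indicator_of_mem, diagonal_one,
        Matrix.mul_one] at hE
      exact ⟨E, fun h1 h2 => absurd ⟨h1, h2⟩ hl, fun _ => hE⟩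
    · exact ⟨0, fun h1 h2 => absurd ⟨h1, h2⟩ hl, fun h => absurd h hl'⟩
  choose E hED hE using hE
  let W : WTuple L n := fun l => E (l + 1) * (E l)ᵀ
  have hWext : ∀ l, c ≤ l → l < b → Wext W l = E (l + 1) * (E l)ᵀ :=
    fun l _ hl => dif_pos (by omega)
  refine ⟨W, ?_⟩
  rw [chainP_eq_mul_transpose _ _ E hcb hWext hED]
  calc r = (1 : Matrix (Fin r) (Fin r) ℝ).rank := by simp
    _ = ((E b)ᵀ * (E b * (E c)ᵀ) * E c).rank := by
      rw [← Matrix.mul_assoc, Matrix.mul_assoc, hE b (Or.inr rfl), hE c (Or.inl rfl),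
        Matrix.one_mul]
    _ ≤ ((E b)ᵀ * (E b * (E c)ᵀ)).rank := rank_mul_le_left _ _
    _ ≤ _ := rank_mul_le_right _ _

def rankCondSet (L : ℕ) (n : ℕ → ℕ) (S : ∀ l : ℕ, Finset (Fin (n l))) (c b : ℕ) :
    Set (WTuple L n) :=
  {W | ((chainP n (Wext W) (fun l => ↑(S l)) c b).rank : ℕ∞) = rankBound n S c b}

theorem isOpen_and_dense_rankCondSet {L : ℕ} (S : ∀ l : ℕ, Finset (Fin (n l))) {c b : ℕ}
    (hcb : c < b) (hbL : b ≤ L + 1) :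
    IsOpen (rankCondSet L n S c b) ∧ Dense (rankCondSet L n S c b) := by
  obtain ⟨r, hr⟩ := ENat.ne_top_iff_exists.mp (rankBound_ne_top S c b)
  simp_rw [rankCondSet, rank_chainP_eq_rankBound_iff _ S hcb, ← hr, Nat.cast_le]
  have hA := analyticOnNhd_chainP_apply (analyticOnNhd_Wext_apply L)
    (fun l => (S l : Set (Fin (n l)))) c b
  obtain ⟨W₀, hW₀⟩ := exists_le_rank_chainP S hcb hbL hr.le
  exact ⟨isOpen_setOf_le_rank (continuous_matrix fun i j => (hA i j).continuous) r,
    dense_setOf_le_rank_of_analyticOnNhd hA hW₀⟩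

theorem rankCondSet_congr {L : ℕ} {S S' : ∀ l : ℕ, Finset (Fin (n l))} {c b : ℕ} (hcb : c < b)
    (hS : ∀ l, c < l → l < b → S l = S' l) : rankCondSet L n S c b = rankCondSet L n S' c b := by
  have hchain : ∀ W : ∀ l : ℕ, Matrix (Fin (n (l + 1))) (Fin (n l)) ℝ,
      chainP n W (fun l => ↑(S l)) c b = chainP n W (fun l => ↑(S' l)) c b :=
    fun W => chainP_congr hcb fun l h1 h2 => by rw [hS l h1 h2]
  simp only [rankCondSet, rankBound_congr hS, hchain]

theorem finite_range_rankCondSet (L : ℕ) (n : ℕ → ℕ) :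
    (Set.range fun x : {x : ℕ × ℕ × (∀ l : ℕ, Finset (Fin (n l))) //
      x.1 < x.2.1 ∧ x.2.1 ≤ L + 1} => rankCondSet L n x.1.2.2 x.1.1 x.1.2.1).Finite := by
  refine (Set.finite_range
    fun y : Fin (L + 2) × Fin (L + 2) × (∀ l : Fin (L + 1), Finset (Fin (n l))) =>
      rankCondSet L n (fun l => if h : l < L + 1 then y.2.2 ⟨l, h⟩ else ∅) y.1 y.2.1).subset ?_
  rintro _ ⟨⟨⟨c, b, S⟩, hcb, hbL⟩, rfl⟩
  dsimp only at hcb hbL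
  refine ⟨(⟨c, by omega⟩, ⟨b, by omega⟩, fun l => S l), rankCondSet_congr hcb fun l _ hl => ?_⟩
  exact dif_pos (by omega)

end

theorem genericRankCond_isOpen_and_dense_general (L : ℕ) (n : ℕ → ℕ) :
    IsOpen {W : WTuple L n | GenericRankCond L n (Wext W)} ∧
      Dense {W : WTuple L n | GenericRankCond L n (Wext W)} := by
  have hset : {W : WTuple L n | GenericRankCond L n (Wext W)} =
      ⋂ x : {x : ℕ × ℕ × (∀ l : ℕ, Finset (Fin (n l))) // x.1 < x.2.1 ∧ x.2.1 ≤ L + 1},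
        rankCondSet L n x.1.2.2 x.1.1 x.1.2.1 := by
    ext W
    simp only [GenericRankCond, rankCondSet, rankBound, Set.mem_ofPred_eq, Set.mem_iInter,
      Subtype.forall, Prod.forall]
    exact ⟨fun h c b S hcb => h c b hcb.1 hcb.2 S, fun h c b hcb hbL S => h c b S ⟨hcb, hbL⟩⟩
  rw [hset]
  exact isOpen_and_dense_iInter_of_finite_range (finite_range_rankCondSet L n)
    (fun x => (isOpen_and_dense_rankCondSet _ x.2.1 x.2.2).1)
    (fun x => (isOpen_and_dense_rankCondSet _ x.2.1 x.2.2).2)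

/-- **Genericity is open and dense.**
For any architecture of positive widths, the set of weight tuples satisfying the
generic rank conditions is open and dense in the product space of all weight
tuples. -/
theorem genericRankCond_isOpen_and_dense (L : ℕ) (n : ℕ → ℕ)
    (hpos : ∀ i, i ≤ L + 1 → 0 < n i) :
    IsOpen {W : WTuple L n | GenericRankCond L n (Wext W)} ∧
      Dense {W : WTuple L n | GenericRankCond L n (Wext W)} :=
  genericRankCond_isOpen_and_dense_general L n

end ReLUNet
end

section
/- Let X ⊆ R^d be a bounded set, P ⊆ X a polytope, H a hyperplane inside P, epsilon > 0, and n >= 2. Then there exist W in R^{n x d} with all rows nonzero and b in R^n such that the ReLU layer f_{W,b} is an oriented slab layer on P, is transparent on X, and every hyperplane H_i = {x : <W_i, x> + b_i = 0} is epsilon-close to H. -/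
/-!
Write `g = ⟨w, ·⟩ + β` and, replacing `(w, β)` by `(-w, -β)` if necessary, pick `y ∈ P` with
`g y > 0`. For small `η > 0` take the neurons `g - (j + 1) η` for `j < n - 1` and `n η - g`: their
hyperplanes are the parallel level sets `g = (j + 1) η`. Shrinking a point of `relint P ∩ H`
towards `y` stays in `relint P`, so `g` takes every value of `[0, g y)` on `relint P` and each
level set is inside `P`. Below level `n η` the active set is `S_i` with `i` the number of levels
passed, above it `S_n`; the first or the last neuron is always nonnegative; and the normalized
coefficients differ from those of `H` only in the bias, by at most `n η / ‖w‖`.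
-/

namespace ReLUNet

open scoped BigOperators symmDiff

/-- The standard inner product `⟨w, x⟩ = ∑ j, w j * x j` on `ℝ^d`. -/
def sInner {d : ℕ} (w x : Fin d → ℝ) : ℝ := ∑ j, w j * x j

/-- The Euclidean norm on `ℝ^d`. -/
noncomputable def euclNorm {d : ℕ} (w : Fin d → ℝ) : ℝ := Real.sqrt (∑ j, (w j) ^ 2)

/-- The (affine) hyperplane `{x : ⟨w, x⟩ + β = 0}`. -/
def Hyp {d : ℕ} (w : Fin d → ℝ) (β : ℝ) : Set (Fin d → ℝ) := {x | sInner w x + β = 0}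

/-- A polytope is the convex hull of a finite set. -/
def IsPolytope {d : ℕ} (P : Set (Fin d → ℝ)) : Prop :=
  ∃ s : Finset (Fin d → ℝ), P = convexHull ℝ (↑s : Set (Fin d → ℝ))

/-- The hyperplane `{⟨w,·⟩ + β = 0}` is *inside* `P` if it meets the relative
interior of `P` and `P` is not contained in it. -/
def HypInside {d : ℕ} (w : Fin d → ℝ) (β : ℝ) (P : Set (Fin d → ℝ)) : Prop :=
  (Hyp w β ∩ intrinsicInterior ℝ P).Nonempty ∧ ¬ P ⊆ Hyp w β

/-- The ReLU layer `x ↦ ReLU (W x + b)`. -/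
noncomputable def reluLayer {d n : ℕ} (W : Fin n → Fin d → ℝ) (b : Fin n → ℝ)
    (x : Fin d → ℝ) : Fin n → ℝ :=
  fun i => max (sInner (W i) x + b i) 0

/-- The activation pattern `S_i = {1, …, i} Δ {n}` (in `0`-based indexing:
`{j : j < i} Δ {j : j = n - 1}`). -/
def slabSet (n i : ℕ) : Set (Fin n) :=
  {j : Fin n | (j : ℕ) < i} ∆ {j : Fin n | (j : ℕ) = n - 1}

/-- A slab layer on a polytope `P`: rows nonzero, each hyperplane inside `P`,
and no two hyperplanes meet inside `P`. -/
def IsSlabLayer {d n : ℕ} (W : Fin n → Fin d → ℝ) (b : Fin n → ℝ)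
    (P : Set (Fin d → ℝ)) : Prop :=
  (∀ i, W i ≠ 0) ∧ (∀ i, HypInside (W i) (b i) P) ∧
    ∀ i j, i ≠ j → Hyp (W i) (b i) ∩ Hyp (W j) (b j) ∩ P = ∅

/-- An oriented slab layer: on `P`, the strict activation patterns are exactly
the sets `slabSet n i` for `i = 0, …, n`, and all of them occur. -/
def IsOriented {d n : ℕ} (W : Fin n → Fin d → ℝ) (b : Fin n → ℝ)
    (P : Set (Fin d → ℝ)) : Prop :=
  (∀ x ∈ P, (∀ j, sInner (W j) x + b j ≠ 0) →
      ∃ i ≤ n, {j | 0 < sInner (W j) x + b j} = slabSet n i) ∧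
    (∀ i ≤ n, ∃ x ∈ P, (∀ j, sInner (W j) x + b j ≠ 0) ∧
      {j | 0 < sInner (W j) x + b j} = slabSet n i)

/-- A ReLU layer is transparent on `X` if at every point of `X` some neuron has
nonnegative preactivation. -/
def Transparent {d n : ℕ} (W : Fin n → Fin d → ℝ) (b : Fin n → ℝ)
    (X : Set (Fin d → ℝ)) : Prop :=
  ∀ x ∈ X, ∃ i, 0 ≤ sInner (W i) x + b i

/-- The `ℓ^∞` norm of the pair `(w, β)`. -/
noncomputable def infNormPair {d : ℕ} (w : Fin d → ℝ) (β : ℝ) : ℝ :=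
  max (⨆ j, |w j|) |β|

/-- `(w', β')` is `ε`-close to `(w, β)` after normalizing by the Euclidean norms
of `w'` and `w`, up to a global sign. -/
noncomputable def EpsClose {d : ℕ} (w' : Fin d → ℝ) (β' : ℝ)
    (w : Fin d → ℝ) (β : ℝ) (ε : ℝ) : Prop :=
  min
    (infNormPair (fun j => w' j / euclNorm w' - w j / euclNorm w)
      (β' / euclNorm w' - β / euclNorm w))
    (infNormPair (fun j => w' j / euclNorm w' + w j / euclNorm w)
      (β' / euclNorm w' + β / euclNorm w)) < ε

/-- A one-hidden-layer ReLU network `x ↦ W₂ ReLU (W₁ x + b₁) + b₂`. -/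
noncomputable def oneLayer {d n m : ℕ} (W1 : Fin n → Fin d → ℝ) (b1 : Fin n → ℝ)
    (W2 : Fin m → Fin n → ℝ) (b2 : Fin m → ℝ) (x : Fin d → ℝ) : Fin m → ℝ :=
  fun p => (∑ i, W2 p i * max (sInner (W1 i) x + b1 i) 0) + b2 p

/-- The set of breakpoints of `f`: points near which `f` is not affine. -/
def Breakpoints {d m : ℕ} (f : (Fin d → ℝ) → Fin m → ℝ) : Set (Fin d → ℝ) :=
  {x | ¬ ∃ U : Set (Fin d → ℝ), IsOpen U ∧ x ∈ U ∧
      ∃ (A : Fin m → Fin d → ℝ) (c : Fin m → ℝ),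
        ∀ y ∈ U, ∀ p, f y p = (∑ j, A p j * y j) + c p}


open AffineMap in
theorem _root_.Convex.homothety_mem_intrinsicInterior {E : Type*} [NormedAddCommGroup E]
    [NormedSpace ℝ E] {s : Set E} (hs : Convex ℝ s) {x y : E} (hx : x ∈ intrinsicInterior ℝ s)
    (hy : y ∈ s) {r : ℝ} (hr0 : 0 < r) (hr1 : r ≤ 1) :
    homothety y r x ∈ intrinsicInterior ℝ s := by
  obtain ⟨x', hx', rfl⟩ := mem_intrinsicInterior.mp hx
  let y' : affineSpan ℝ s := ⟨y, subset_affineSpan ℝ s hy⟩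
  have : Nonempty (affineSpan ℝ s) := ⟨y'⟩
  have hcoe (p : affineSpan ℝ s) : (homothety y' r p : E) = homothety y r (p : E) := by
    simp [homothety_apply, y']
  have hmaps : homothety y' r '' ((↑) ⁻¹' s) ⊆ (↑) ⁻¹' s := by
    rintro _ ⟨p, hp, rfl⟩
    rw [Set.mem_preimage, hcoe, homothety_eq_lineMap]
    exact hs.lineMap_mem hy hp ⟨hr0.le, hr1⟩
  have hint : homothety y' r '' interior ((↑) ⁻¹' s) ⊆ interior ((↑) ⁻¹' s) :=
    interior_maximal ((Set.image_mono interior_subset).trans hmaps)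
      ((homothety_isOpenMap y' r hr0.ne') _ isOpen_interior)
  exact ⟨_, hint ⟨x', hx', rfl⟩, hcoe x'⟩

theorem _root_.Convex.Ico_subset_image_intrinsicInterior {E : Type*} [NormedAddCommGroup E]
    [NormedSpace ℝ E] {s : Set E} (hs : Convex ℝ s) (f : E →ᵃ[ℝ] ℝ) {x y : E}
    (hx : x ∈ intrinsicInterior ℝ s) (hy : y ∈ s) :
    Set.Ico (f x) (f y) ⊆ f '' intrinsicInterior ℝ s := by
  intro t ⟨htx, hty⟩
  have hxy : 0 < f y - f x := by linarith
  refine ⟨AffineMap.homothety y ((f y - t) / (f y - f x)) x,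
    hs.homothety_mem_intrinsicInterior hx hy (div_pos (by linarith) hxy)
      ((div_le_one hxy).mpr (by linarith)), ?_⟩
  rw [AffineMap.homothety_eq_lineMap, AffineMap.apply_lineMap, AffineMap.lineMap_apply_ring']
  field_simp
  ring

variable {d n : ℕ}

lemma sInner_neg (w x : Fin d → ℝ) : sInner (-w) x = -sInner w x :=
  neg_dotProduct w x

lemma euclNorm_pos {w : Fin d → ℝ} (hw : w ≠ 0) : 0 < euclNorm w := by
  obtain ⟨j, hj⟩ := Function.ne_iff.mp hw
  exact Real.sqrt_pos.mpr <| Finset.sum_pos' (fun i _ => sq_nonneg (w i))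
    ⟨j, Finset.mem_univ j, sq_pos_of_ne_zero hj⟩

lemma euclNorm_neg (w : Fin d → ℝ) : euclNorm (-w) = euclNorm w := by
  simp [euclNorm]

def affineForm (w : Fin d → ℝ) (β : ℝ) : (Fin d → ℝ) →ᵃ[ℝ] ℝ :=
  (dotProductBilin ℝ ℝ w).toAffineMap + AffineMap.const ℝ _ β

@[simp]
lemma affineForm_apply (w : Fin d → ℝ) (β : ℝ) (x : Fin d → ℝ) :
    affineForm w β x = sInner w x + β :=
  rfl

lemma IsPolytope.convex {P : Set (Fin d → ℝ)} (hP : IsPolytope P) : Convex ℝ P := by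
  obtain ⟨s, rfl⟩ := hP
  exact convex_convexHull ℝ _

lemma hyp_neg (w : Fin d → ℝ) (β : ℝ) : Hyp (-w) (-β) = Hyp w β := by
  ext x
  change sInner (-w) x + -β = 0 ↔ sInner w x + β = 0
  rw [sInner_neg, ← neg_add, neg_eq_zero]

lemma HypInside.neg {w : Fin d → ℝ} {β : ℝ} {P : Set (Fin d → ℝ)} (h : HypInside w β P) :
    HypInside (-w) (-β) P := by
  rwa [HypInside, hyp_neg]

lemma infNormPair_neg (f : Fin d → ℝ) (a : ℝ) :
    infNormPair (fun j => -f j) (-a) = infNormPair f a := by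
  simp [infNormPair]

lemma epsClose_neg_left_iff {w' w : Fin d → ℝ} {β' β ε : ℝ} :
    EpsClose (-w') (-β') w β ε ↔ EpsClose w' β' w β ε := by
  have hsub (a b : ℝ) : -a - b = -(a + b) := by ring
  have hadd (a b : ℝ) : -a + b = -(a - b) := by ring
  simp only [EpsClose, euclNorm_neg, Pi.neg_apply, neg_div, hsub, hadd, infNormPair_neg]
  rw [min_comm]

lemma epsClose_neg_right_iff {w' w : Fin d → ℝ} {β' β ε : ℝ} :
    EpsClose w' β' (-w) (-β) ε ↔ EpsClose w' β' w β ε := by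
  simp only [EpsClose, euclNorm_neg, Pi.neg_apply, neg_div, sub_neg_eq_add, ← sub_eq_add_neg]
  rw [min_comm]

lemma epsClose_sub_right {w : Fin d → ℝ} (hw : w ≠ 0) {β r ε : ℝ} (hr : |r| < ε * euclNorm w) :
    EpsClose w (β - r) w β ε := by
  refine (min_le_left _ _).trans_lt ?_
  have hN := euclNorm_pos hw
  simp only [infNormPair, sub_self, abs_zero, Real.iSup_const_zero]
  rw [sub_div, sub_sub_cancel_left, abs_neg, abs_div, abs_of_pos hN, max_eq_right (by positivity),
    div_lt_iff₀ hN]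
  exact hr

section SlabModel

variable {η t : ℝ}

def slabLevel (η : ℝ) (j : Fin n) : ℝ := ((j + 1 : ℕ) : ℝ) * η

def slabPreact (η t : ℝ) (j : Fin n) : ℝ :=
  if (j : ℕ) = n - 1 then slabLevel η j - t else t - slabLevel η j

-- the number of levels `(j + 1) η` below `t` while the last neuron is on (`t < n η`), else `n`
noncomputable def slabIndex (n : ℕ) (η t : ℝ) : ℕ := if t < n * η then ⌈t / η⌉₊ - 1 else n

lemma mem_slabSet_iff {i : ℕ} {j : Fin n} :
    j ∈ slabSet n i ↔ ((j : ℕ) < i ↔ (j : ℕ) ≠ n - 1) := by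
  simp only [slabSet, Set.mem_symmDiff, Set.mem_ofPred_eq]
  tauto

lemma slabLevel_injective (hη : η ≠ 0) : Function.Injective (slabLevel (n := n) η) := by
  intro i j h
  have := mul_right_cancel₀ hη h
  exact Fin.ext (by exact_mod_cast Nat.succ_injective (by exact_mod_cast this))

lemma slabLevel_pos (hη : 0 < η) (j : Fin n) : 0 < slabLevel η j := by
  unfold slabLevel; positivity

lemma slabLevel_le (hη : 0 ≤ η) (j : Fin n) : slabLevel η j ≤ n * η :=
  mul_le_mul_of_nonneg_right (by exact_mod_cast j.isLt) hη

lemma slabLevel_of_eq {j : Fin n} (hj : (j : ℕ) = n - 1) : slabLevel η j = n * η := by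
  rw [slabLevel, hj, Nat.sub_add_cancel (by omega : 1 ≤ n)]

lemma slabPreact_eq_zero_iff {j : Fin n} : slabPreact η t j = 0 ↔ t = slabLevel η j := by
  unfold slabPreact
  split_ifs <;> constructor <;> intro h <;> linarith

lemma exists_slabPreact_nonneg (hn : 2 ≤ n) (hη : 0 ≤ η) (t : ℝ) :
    ∃ j : Fin n, 0 ≤ slabPreact η t j := by
  by_cases ht : t ≤ n * η
  · refine ⟨⟨n - 1, by omega⟩, ?_⟩
    rw [slabPreact, if_pos rfl, slabLevel_of_eq rfl]
    linarith
  · refine ⟨⟨0, by omega⟩, ?_⟩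
    rw [slabPreact, if_neg (show 0 ≠ n - 1 by omega)]
    have : slabLevel η (⟨0, by omega⟩ : Fin n) ≤ n * η := slabLevel_le hη _
    linarith

lemma ceil_div_le (hη : 0 < η) (ht : t ≤ n * η) : ⌈t / η⌉₊ ≤ n :=
  Nat.ceil_le.mpr ((div_le_iff₀ hη).mpr ht)

lemma slabIndex_le (hη : 0 < η) (t : ℝ) : slabIndex n η t ≤ n := by
  unfold slabIndex
  split_ifs with ht
  · have := ceil_div_le hη ht.le
    omega
  · rfl

lemma setOf_slabPreact_pos (hη : 0 < η) (t : ℝ) :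
    {j : Fin n | 0 < slabPreact η t j} = slabSet n (slabIndex n η t) := by
  ext j
  have hj := j.isLt
  rw [Set.mem_ofPred_eq, mem_slabSet_iff, slabPreact, slabIndex]
  by_cases hlast : (j : ℕ) = n - 1 <;> by_cases ht : t < n * η <;>
    simp only [hlast, ht, if_true, if_false]
  · have := ceil_div_le hη ht.le
    exact iff_of_true (by linarith [slabLevel_of_eq (η := η) hlast]) (by omega)
  · exact iff_of_false (by linarith [slabLevel_of_eq (η := η) hlast]) (by omega)
  · rw [sub_pos, slabLevel, ← lt_div_iff₀ hη, ← Nat.lt_ceil]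
    omega
  · have hlt : slabLevel η j < n * η :=
      mul_lt_mul_of_pos_right (by exact_mod_cast (by omega : (j : ℕ) + 1 < n)) hη
    exact iff_of_true (by linarith) (by omega)

lemma slabIndex_add_half (hη : 0 < η) {i : ℕ} (hi : i ≤ n) :
    slabIndex n η ((i + 1 / 2) * η) = i := by
  unfold slabIndex
  rcases hi.lt_or_eq with hi | rfl
  · have hlt : (i : ℝ) + 1 / 2 < n := by
      have : ((i + 1 : ℕ) : ℝ) ≤ n := by exact_mod_cast hi
      push_cast at this
      linarith
    rw [if_pos (mul_lt_mul_of_pos_right hlt hη), mul_div_cancel_right₀ _ hη.ne',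
      (Nat.ceil_eq_iff (Nat.succ_ne_zero i)).mpr (by push_cast; constructor <;> linarith)]
    rfl
  · rw [if_neg (not_lt.mpr (mul_le_mul_of_nonneg_right (by linarith) hη.le))]

lemma slabPreact_add_half_ne_zero (hη : η ≠ 0) (i : ℕ) (j : Fin n) :
    slabPreact η ((i + 1 / 2) * η) j ≠ 0 := by
  rw [Ne, slabPreact_eq_zero_iff, slabLevel]
  intro h
  have h₁ := mul_right_cancel₀ hη h
  have h' : ((2 * i + 1 : ℕ) : ℝ) = ((2 * (j + 1) : ℕ) : ℝ) := by
    push_cast at h₁ ⊢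
    linarith
  have := Nat.cast_injective h'
  omega

end SlabModel

section SlabLayer

variable {w : Fin d → ℝ} {β η : ℝ}

def slabWeights (w : Fin d → ℝ) (j : Fin n) : Fin d → ℝ :=
  if (j : ℕ) = n - 1 then -w else w

def slabBias (β η : ℝ) (j : Fin n) : ℝ :=
  if (j : ℕ) = n - 1 then -(β - slabLevel η j) else β - slabLevel η j

lemma sInner_slabWeights_add_slabBias (x : Fin d → ℝ) (j : Fin n) :
    sInner (slabWeights w j) x + slabBias β η j = slabPreact η (sInner w x + β) j := by
  unfold slabWeights slabBias slabPreact
  split_ifs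
  · rw [sInner_neg]
    ring
  · ring

lemma slabWeights_ne_zero (hw : w ≠ 0) (j : Fin n) : slabWeights w j ≠ 0 := by
  unfold slabWeights
  split_ifs
  exacts [neg_ne_zero.mpr hw, hw]

lemma mem_hyp_slab_iff {x : Fin d → ℝ} {j : Fin n} :
    x ∈ Hyp (slabWeights w j) (slabBias β η j) ↔ sInner w x + β = slabLevel η j := by
  rw [Hyp, Set.mem_ofPred_eq, sInner_slabWeights_add_slabBias, slabPreact_eq_zero_iff]

lemma transparent_slab (hn : 2 ≤ n) (hη : 0 ≤ η) (X : Set (Fin d → ℝ)) :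
    Transparent (slabWeights (n := n) w) (slabBias β η) X := fun x _ => by
  simpa only [sInner_slabWeights_add_slabBias] using exists_slabPreact_nonneg hn hη _

lemma epsClose_slab {ε : ℝ} (hw : w ≠ 0) (hη : 0 ≤ η) (hηε : n * η < ε * euclNorm w)
    (j : Fin n) : EpsClose (slabWeights w j) (slabBias β η j) w β ε := by
  have hr : |slabLevel η j| < ε * euclNorm w := by
    rw [abs_of_nonneg (by unfold slabLevel; positivity)]
    exact (slabLevel_le hη j).trans_lt hηε
  unfold slabWeights slabBias
  split_ifs
  · exact epsClose_neg_left_iff.mpr (epsClose_sub_right hw hr)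
  · exact epsClose_sub_right hw hr

lemma add_half_mul_mem_Ioo (hη : 0 < η) {i : ℕ} (hi : i ≤ n) :
    ((i : ℝ) + 1 / 2) * η ∈ Set.Ioo 0 ((n + 1) * η) := by
  have : (i : ℝ) ≤ n := by exact_mod_cast hi
  constructor <;> nlinarith

variable {P : Set (Fin d → ℝ)}
  (hlevels : Set.Ioo 0 ((n + 1) * η) ⊆ affineForm w β '' intrinsicInterior ℝ P)
include hlevels

lemma isSlabLayer_slab (hw : w ≠ 0) (hη : 0 < η) :
    IsSlabLayer (slabWeights (n := n) w) (slabBias β η) P := by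
  refine ⟨slabWeights_ne_zero hw, fun j => ⟨?_, ?_⟩, fun i j hij => ?_⟩
  · obtain ⟨z, hz, hgz⟩ := hlevels ⟨slabLevel_pos hη j,
      (slabLevel_le hη.le j).trans_lt (by linarith)⟩
    exact ⟨z, mem_hyp_slab_iff.mpr hgz, hz⟩
  · obtain ⟨z, hz, hgz⟩ := hlevels (add_half_mul_mem_Ioo hη j.isLt.le)
    intro hsub
    have := (sInner_slabWeights_add_slabBias z j).symm.trans (hsub (intrinsicInterior_subset hz))
    rw [← affineForm_apply, hgz] at this
    exact slabPreact_add_half_ne_zero hη.ne' _ j this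
  · rw [Set.eq_empty_iff_forall_notMem]
    rintro x ⟨⟨hi, hj⟩, -⟩
    exact hij (slabLevel_injective hη.ne' ((mem_hyp_slab_iff.mp hi).symm.trans
      (mem_hyp_slab_iff.mp hj)))

lemma isOriented_slab (hη : 0 < η) : IsOriented (slabWeights (n := n) w) (slabBias β η) P := by
  simp only [IsOriented, sInner_slabWeights_add_slabBias, setOf_slabPreact_pos hη]
  refine ⟨fun x _ _ => ⟨_, slabIndex_le hη _, rfl⟩, fun i hi => ?_⟩
  obtain ⟨z, hz, hgz⟩ := hlevels (add_half_mul_mem_Ioo hη hi)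
  rw [affineForm_apply] at hgz
  refine ⟨z, intrinsicInterior_subset hz, fun j => ?_, ?_⟩
  · rw [hgz]
    exact slabPreact_add_half_ne_zero hη.ne' i j
  · rw [hgz, slabIndex_add_half hη hi]

end SlabLayer

theorem exists_slab_layer_of_pos {w : Fin d → ℝ} {β ε : ℝ} {P : Set (Fin d → ℝ)} (hn : 2 ≤ n)
    (hP : Convex ℝ P) (hw : w ≠ 0) (hinside : HypInside w β P) {y : Fin d → ℝ} (hy : y ∈ P)
    (hy0 : 0 < sInner w y + β) (X : Set (Fin d → ℝ)) (hε : 0 < ε) :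
    ∃ (W : Fin n → Fin d → ℝ) (b : Fin n → ℝ), IsSlabLayer W b P ∧ IsOriented W b P ∧
      Transparent W b X ∧ ∀ i, EpsClose (W i) (b i) w β ε := by
  obtain ⟨x₀, hx₀H, hx₀⟩ := hinside.1
  have hN := euclNorm_pos hw
  set η := min ((sInner w y + β) / (n + 1)) (ε * euclNorm w / (n + 1))
  have hη : 0 < η := lt_min (by positivity) (by positivity)
  have hηy : (n + 1) * η ≤ sInner w y + β :=
    (le_div_iff₀' (by positivity)).mp (min_le_left _ _)
  have hηε : n * η < ε * euclNorm w := by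
    have : (n + 1) * η ≤ ε * euclNorm w := (le_div_iff₀' (by positivity)).mp (min_le_right _ _)
    linarith
  have hlevels : Set.Ioo 0 ((n + 1) * η) ⊆ affineForm w β '' intrinsicInterior ℝ P :=
    fun t ht => hP.Ico_subset_image_intrinsicInterior (affineForm w β) hx₀ hy
      ⟨by simpa [hx₀H.out] using ht.1.le, by simpa using ht.2.trans_le hηy⟩
  exact ⟨_, _, isSlabLayer_slab hlevels hw hη, isOriented_slab hlevels hη,
    transparent_slab hn hη.le X, epsClose_slab hw hη.le hηε⟩

theorem exists_oriented_slab_layer_general (d n : ℕ) (hn : 2 ≤ n)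
    (X : Set (Fin d → ℝ))
    (P : Set (Fin d → ℝ)) (hP : IsPolytope P)
    (w : Fin d → ℝ) (hw : w ≠ 0) (β : ℝ) (hinside : HypInside w β P)
    (ε : ℝ) (hε : 0 < ε) :
    ∃ (W : Fin n → Fin d → ℝ) (b : Fin n → ℝ),
      (∀ i, W i ≠ 0) ∧
      IsSlabLayer W b P ∧ IsOriented W b P ∧ Transparent W b X ∧
      ∀ i, EpsClose (W i) (b i) w β ε := by
  obtain ⟨y, hyP, hy⟩ := Set.not_subset.mp hinside.2
  rcases Ne.lt_or_gt (show sInner w y + β ≠ 0 from hy) with hneg | hpos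
  · obtain ⟨W, b, hslab, horient, htransp, hclose⟩ := exists_slab_layer_of_pos hn hP.convex
      (neg_ne_zero.mpr hw) hinside.neg hyP (by rw [sInner_neg]; linarith) X hε
    exact ⟨W, b, hslab.1, hslab, horient, htransp, fun i => epsClose_neg_right_iff.mp (hclose i)⟩
  · obtain ⟨W, b, hslab, horient, htransp, hclose⟩ :=
      exists_slab_layer_of_pos hn hP.convex hw hinside hyP hpos X hε
    exact ⟨W, b, hslab.1, hslab, horient, htransp, hclose⟩

/-- **From a hyperplane to an oriented transparent slab layer.**
Given a bounded set `X`, a polytope `P ⊆ X`, a hyperplane inside `P`, `ε > 0`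
and `n ≥ 2`, there is a ReLU layer with `n` neurons whose rows are nonzero that
is an oriented slab layer on `P`, is transparent on `X`, and all of whose
hyperplanes are `ε`-close to the given one. -/
theorem exists_oriented_slab_layer (d n : ℕ) (hn : 2 ≤ n)
    (X : Set (Fin d → ℝ)) (hX : Bornology.IsBounded X)
    (P : Set (Fin d → ℝ)) (hP : IsPolytope P) (hPX : P ⊆ X)
    (w : Fin d → ℝ) (hw : w ≠ 0) (β : ℝ) (hinside : HypInside w β P)
    (ε : ℝ) (hε : 0 < ε) :
    ∃ (W : Fin n → Fin d → ℝ) (b : Fin n → ℝ),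
      (∀ i, W i ≠ 0) ∧
      IsSlabLayer W b P ∧ IsOriented W b P ∧ Transparent W b X ∧
      ∀ i, EpsClose (W i) (b i) w β ε :=
  exists_oriented_slab_layer_general d n hn X P hP w hw β hinside ε hε

end ReLUNet
end

section
/- Let f(x) = W^(2) ReLU(W^(1) x + b^(1)) + b^(2) be a one-hidden-layer ReLU network from R^d to R^m with n hidden neurons. Let u in R^d with ||u||_2 = 1 and beta in R, and let I = {i in {1, ..., n} : there exists lambda_i ≠ 0 with (W^(1)_i, b^(1)_i) = lambda_i (u, beta)}. Let x_0 satisfy <u, x_0> + beta = 0 and <W^(1)_j, x_0> + b^(1)_j ≠ 0 for every j not in I. Then there exist delta > 0, matrices A_+, A_- in R^{m x d}, and vectors c_+, c_- in R^m such that f(x) = A_+ x + c_+ for all x in the open ball B(x_0, delta) with <u, x> + beta >= 0, f(x) = A_- x + c_- for all x in B(x_0, delta) with <u, x> + beta <= 0, and A_+ - A_- = (sum_{i in I} ||W^(1)_i||_2 * W^(2)_{:,i}) u^T. -/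
namespace ReLUNet

open scoped BigOperators symmDiff

/-! Near `x₀`, every neuron outside `I` keeps the strict sign it has at `x₀`, while a neuron of
`I` with parameters `c • (u, β)` has preactivation `c (⟨u, x⟩ + β)`, so on either closed side of
the hyperplane its ReLU is the identity or zero. Hence on each side `f` is the affine map of one
activation pattern, the pattern at `x₀ ± t u` for small `t > 0`. The two patterns differ exactly on
`I`: a neuron with `c > 0` is active only on the `+` side, one with `c < 0` only on the `-` side,
and either way it contributes `|c| W₂_{:,i} uᵀ = ‖W₁ᵢ‖ W₂_{:,i} uᵀ` to the jump. -/

lemma sInner_const_mul_left {d : ℕ} (c : ℝ) (u x : Fin d → ℝ) :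
    sInner (fun j => c * u j) x = c * sInner u x := by
  simp only [sInner, Finset.mul_sum, mul_assoc]

lemma sInner_neg_left {d : ℕ} (u x : Fin d → ℝ) : sInner (-u) x = -sInner u x := by
  simp [sInner]

lemma sInner_neg_right {d : ℕ} (w u : Fin d → ℝ) : sInner w (-u) = -sInner w u := by
  simp [sInner]

lemma sInner_self_pos {d : ℕ} {u : Fin d → ℝ} (hu : u ≠ 0) : 0 < sInner u u := by
  refine (Finset.sum_nonneg fun j _ => mul_self_nonneg (u j)).lt_of_ne' fun h => hu ?_
  funext j
  exact (Finset.sum_mul_self_eq_zero_iff _ _).mp h j (Finset.mem_univ j)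

lemma sInner_self_eq_one {d : ℕ} {u : Fin d → ℝ} (hu : euclNorm u = 1) : sInner u u = 1 := by
  rw [euclNorm, Real.sqrt_eq_one] at hu
  simpa [sInner, sq] using hu

lemma euclNorm_const_mul {d : ℕ} (c : ℝ) (u : Fin d → ℝ) :
    euclNorm (fun j => c * u j) = |c| * euclNorm u := by
  rw [euclNorm, euclNorm, ← Real.sqrt_sq_eq_abs, ← Real.sqrt_mul (sq_nonneg c), Finset.mul_sum]
  simp only [mul_pow]

lemma dist_le_euclNorm_sub {d : ℕ} (x y : Fin d → ℝ) :
    dist x y ≤ euclNorm (fun j => x j - y j) := by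
  refine (dist_pi_le_iff (Real.sqrt_nonneg _)).2 fun k => ?_
  rw [Real.dist_eq]
  exact Real.abs_le_sqrt
    (Finset.single_le_sum (f := fun j => (x j - y j) ^ 2) (fun j _ => sq_nonneg _)
      (Finset.mem_univ k))

lemma exists_euclBall_sign_stable {d : ℕ} {ι : Type*} (s : Finset ι) (w : ι → Fin d → ℝ)
    (b : ι → ℝ) (x0 : Fin d → ℝ) (h : ∀ i ∈ s, sInner (w i) x0 + b i ≠ 0) :
    ∃ δ > (0 : ℝ), ∀ x, euclNorm (fun j => x j - x0 j) < δ →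
      ∀ i ∈ s, 0 < (sInner (w i) x0 + b i) * (sInner (w i) x + b i) := by
  have hev : ∀ᶠ x in nhds x0, ∀ i ∈ s, 0 < (sInner (w i) x0 + b i) * (sInner (w i) x + b i) := by
    refine (Filter.eventually_all_finset s).2 fun i hi => ?_
    have hcont : Continuous fun x => (sInner (w i) x0 + b i) * (sInner (w i) x + b i) := by
      unfold sInner; fun_prop
    exact continuousAt_const.eventually_lt hcont.continuousAt (mul_self_pos.2 (h i hi))
  obtain ⟨δ, hδ, hball⟩ := Metric.eventually_nhds_iff.1 hev
  exact ⟨δ, hδ, fun x hx => hball ((dist_le_euclNorm_sub x x0).trans_lt hx)⟩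

section Network

variable {d m n : ℕ}

/-- Neuron `(w, b)` is active just beyond `x₀` in direction `v`, i.e. at `x₀ + t v` for all
small `t > 0`: this is the lexicographic sign of `(⟨w, x₀⟩ + b, ⟨w, v⟩)`. -/
def ActiveToward (w : Fin d → ℝ) (b : ℝ) (x0 v : Fin d → ℝ) : Prop :=
  0 < sInner w x0 + b ∨ (sInner w x0 + b = 0 ∧ 0 < sInner w v)

noncomputable instance (w : Fin d → ℝ) (b : ℝ) (x0 v : Fin d → ℝ) :
    Decidable (ActiveToward w b x0 v) := by
  unfold ActiveToward; infer_instance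

noncomputable def activeToward (W1 : Fin n → Fin d → ℝ) (b1 : Fin n → ℝ) (x0 v : Fin d → ℝ) :
    Finset (Fin n) :=
  Finset.univ.filter fun i => ActiveToward (W1 i) (b1 i) x0 v

def activeMatrix (W1 : Fin n → Fin d → ℝ) (W2 : Fin m → Fin n → ℝ) (S : Finset (Fin n)) :
    Fin m → Fin d → ℝ :=
  fun p j => ∑ i ∈ S, W2 p i * W1 i j

def activeBias (b1 : Fin n → ℝ) (W2 : Fin m → Fin n → ℝ) (b2 : Fin m → ℝ)
    (S : Finset (Fin n)) : Fin m → ℝ :=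
  fun p => (∑ i ∈ S, W2 p i * b1 i) + b2 p

lemma oneLayer_eq_of_relu_eq_ite (W1 : Fin n → Fin d → ℝ) (b1 : Fin n → ℝ)
    (W2 : Fin m → Fin n → ℝ) (b2 : Fin m → ℝ) (S : Finset (Fin n)) (x : Fin d → ℝ)
    (hS : ∀ i, max (sInner (W1 i) x + b1 i) 0 = if i ∈ S then sInner (W1 i) x + b1 i else 0)
    (p : Fin m) :
    oneLayer W1 b1 W2 b2 x p = (∑ j, activeMatrix W1 W2 S p j * x j) + activeBias b1 W2 b2 S p := by
  simp only [oneLayer, hS, mul_ite, mul_zero, Finset.sum_ite_mem, Finset.univ_inter]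
  simp only [activeMatrix, activeBias, sInner, mul_add, Finset.sum_add_distrib, Finset.mul_sum,
    Finset.sum_mul]
  rw [Finset.sum_comm]
  simp only [mul_assoc, add_assoc]

lemma activeToward_iff_of_ne {w : Fin d → ℝ} {b : ℝ} {x0 : Fin d → ℝ}
    (h : sInner w x0 + b ≠ 0) (v : Fin d → ℝ) : ActiveToward w b x0 v ↔ 0 < sInner w x0 + b := by
  simp [ActiveToward, h]

lemma relu_eq_ite_of_sign_stable {w : Fin d → ℝ} {b : ℝ} {x0 x : Fin d → ℝ}
    (h : 0 < (sInner w x0 + b) * (sInner w x + b)) (v : Fin d → ℝ) :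
    max (sInner w x + b) 0 = if ActiveToward w b x0 v then sInner w x + b else 0 := by
  split_ifs with hpos <;> rw [activeToward_iff_of_ne (left_ne_zero_of_mul h.ne') v] at hpos
  · exact max_eq_left (pos_of_mul_pos_right h hpos.le).le
  · exact max_eq_right (neg_of_mul_pos_right h (not_lt.1 hpos)).le

lemma relu_eq_ite_of_proportional {w u x0 x : Fin d → ℝ} {b β c : ℝ} (hu : u ≠ 0)
    (hw : ∀ j, w j = c * u j) (hb : b = c * β) (hx0 : sInner u x0 + β = 0)
    (hside : 0 ≤ sInner u x + β) :
    max (sInner w x + b) 0 = if ActiveToward w b x0 u then sInner w x + b else 0 := by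
  have hpre : ∀ y, sInner w y + b = c * (sInner u y + β) := fun y => by
    rw [show w = fun j => c * u j from funext hw, sInner_const_mul_left, hb, mul_add]
  have hactive : ActiveToward w b x0 u ↔ 0 < c := by
    rw [ActiveToward, hpre, hx0, show w = fun j => c * u j from funext hw,
      sInner_const_mul_left, mul_zero]
    simp [mul_pos_iff_of_pos_right (sInner_self_pos hu)]
  rw [hpre]
  split_ifs with hc <;> rw [hactive] at hc
  · exact max_eq_left (mul_nonneg hc.le hside)
  · exact max_eq_right (mul_nonpos_of_nonpos_of_nonneg (not_lt.1 hc) hside)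

lemma oneLayer_eq_activeToward (W1 : Fin n → Fin d → ℝ) (b1 : Fin n → ℝ)
    (W2 : Fin m → Fin n → ℝ) (b2 : Fin m → ℝ) {u x0 x : Fin d → ℝ} {β : ℝ}
    {I : Finset (Fin n)} (hu : u ≠ 0)
    (hI : ∀ i ∈ I, ∃ c : ℝ, (∀ j, W1 i j = c * u j) ∧ b1 i = c * β)
    (hx0 : sInner u x0 + β = 0) (hside : 0 ≤ sInner u x + β)
    (hstable : ∀ i ∉ I, 0 < (sInner (W1 i) x0 + b1 i) * (sInner (W1 i) x + b1 i)) (p : Fin m) :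
    oneLayer W1 b1 W2 b2 x p = (∑ j, activeMatrix W1 W2 (activeToward W1 b1 x0 u) p j * x j) +
      activeBias b1 W2 b2 (activeToward W1 b1 x0 u) p := by
  refine oneLayer_eq_of_relu_eq_ite W1 b1 W2 b2 _ x (fun i => ?_) p
  simp only [activeToward, Finset.mem_filter, Finset.mem_univ, true_and]
  by_cases hi : i ∈ I
  · obtain ⟨c, hw, hb⟩ := hI i hi
    exact relu_eq_ite_of_proportional hu hw hb hx0 hside
  · exact relu_eq_ite_of_sign_stable (hstable i hi) u

lemma ite_activeToward_sub_ite_activeToward_neg {w u x0 : Fin d → ℝ} {b β c : ℝ}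
    (hu : euclNorm u = 1) (hc : c ≠ 0) (hw : ∀ j, w j = c * u j) (hb : b = c * β)
    (hx0 : sInner u x0 + β = 0) (a : ℝ) (j : Fin d) :
    ((if ActiveToward w b x0 u then a * w j else 0) -
      if ActiveToward w b x0 (-u) then a * w j else 0) = euclNorm w * a * u j := by
  have hw' : w = fun j => c * u j := funext hw
  have h0 : sInner w x0 + b = 0 := by rw [hw', sInner_const_mul_left, hb, ← mul_add, hx0, mul_zero]
  have hwu : sInner w u = c := by rw [hw', sInner_const_mul_left, sInner_self_eq_one hu, mul_one]
  have hnorm : euclNorm w = |c| := by rw [hw', euclNorm_const_mul, hu, mul_one]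
  have hplus : ActiveToward w b x0 u ↔ 0 < c := by simp [ActiveToward, h0, hwu]
  have hminus : ActiveToward w b x0 (-u) ↔ c < 0 := by
    simp [ActiveToward, h0, sInner_neg_right, hwu]
  rw [hnorm, hw j]
  rcases hc.lt_or_gt with hneg | hpos
  · rw [if_neg (by rw [hplus]; exact hneg.not_gt), if_pos (hminus.2 hneg), abs_of_neg hneg]
    ring
  · rw [if_pos (hplus.2 hpos), if_neg (by rw [hminus]; exact hpos.not_gt), abs_of_pos hpos]
    ring

lemma activeMatrix_activeToward_sub_neg (W1 : Fin n → Fin d → ℝ) (b1 : Fin n → ℝ)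
    (W2 : Fin m → Fin n → ℝ) {u x0 : Fin d → ℝ} {β : ℝ} {I : Finset (Fin n)}
    (hu : euclNorm u = 1)
    (hI : ∀ i ∈ I, ∃ c : ℝ, c ≠ 0 ∧ (∀ j, W1 i j = c * u j) ∧ b1 i = c * β)
    (hx0 : sInner u x0 + β = 0) (hx0' : ∀ i ∉ I, sInner (W1 i) x0 + b1 i ≠ 0)
    (p : Fin m) (j : Fin d) :
    activeMatrix W1 W2 (activeToward W1 b1 x0 u) p j -
        activeMatrix W1 W2 (activeToward W1 b1 x0 (-u)) p j =
      (∑ i ∈ I, euclNorm (W1 i) * W2 p i) * u j := by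
  rw [Finset.sum_mul, ← Finset.univ_inter I, ← Finset.sum_ite_mem]
  simp only [activeMatrix, activeToward, Finset.sum_filter, ← Finset.sum_sub_distrib]
  refine Finset.sum_congr rfl fun i _ => ?_
  by_cases hi : i ∈ I
  · obtain ⟨c, hc, hw, hb⟩ := hI i hi
    rw [if_pos hi]
    exact ite_activeToward_sub_ite_activeToward_neg hu hc hw hb hx0 _ j
  · simp only [if_neg hi, activeToward_iff_of_ne (hx0' i hi), sub_self]

end Network

/-- **Local affine decomposition of a shallow network across a hyperplane.**
Let `f = W₂ ReLU (W₁ x + b₁) + b₂` be a one-hidden-layer network, `u` a unit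
vector, `β ∈ ℝ`, and `I` the set of neurons whose parameters are a nonzero
multiple of `(u, β)`.  At any point `x₀` of the hyperplane `⟨u,·⟩ + β = 0` where
all neurons outside `I` have nonzero preactivation, `f` is affine on each side
of the hyperplane in a small ball, and the jump of the linear part is the
rank-one matrix `(∑_{i ∈ I} ‖W₁ᵢ‖₂ W₂_{:,i}) uᵀ`. -/
theorem shallow_local_tropical_weight (d m n : ℕ)
    (W1 : Fin n → Fin d → ℝ) (b1 : Fin n → ℝ)
    (W2 : Fin m → Fin n → ℝ) (b2 : Fin m → ℝ)
    (u : Fin d → ℝ) (hu : euclNorm u = 1) (β : ℝ)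
    (I : Finset (Fin n))
    (hI : ∀ i, i ∈ I ↔ ∃ lam : ℝ, lam ≠ 0 ∧ (∀ j, W1 i j = lam * u j) ∧ b1 i = lam * β)
    (x0 : Fin d → ℝ) (hx0 : sInner u x0 + β = 0)
    (hx0' : ∀ j ∉ I, sInner (W1 j) x0 + b1 j ≠ 0) :
    ∃ δ > (0 : ℝ), ∃ (Ap Am : Fin m → Fin d → ℝ) (cp cm : Fin m → ℝ),
      (∀ x, euclNorm (fun j => x j - x0 j) < δ → 0 ≤ sInner u x + β →
        ∀ p, oneLayer W1 b1 W2 b2 x p = (∑ j, Ap p j * x j) + cp p) ∧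
      (∀ x, euclNorm (fun j => x j - x0 j) < δ → sInner u x + β ≤ 0 →
        ∀ p, oneLayer W1 b1 W2 b2 x p = (∑ j, Am p j * x j) + cm p) ∧
      (∀ p j, Ap p j - Am p j = (∑ i ∈ I, euclNorm (W1 i) * W2 p i) * u j) := by
  have hu0 : u ≠ 0 := by
    rintro rfl
    simp [euclNorm] at hu
  obtain ⟨δ, hδ, hstable⟩ := exists_euclBall_sign_stable Iᶜ W1 b1 x0
    fun i hi => hx0' i (Finset.mem_compl.1 hi)
  refine ⟨δ, hδ, _, _, activeBias b1 W2 b2 (activeToward W1 b1 x0 u),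
    activeBias b1 W2 b2 (activeToward W1 b1 x0 (-u)), fun x hx hside => ?_, fun x hx hside => ?_,
    activeMatrix_activeToward_sub_neg W1 b1 W2 hu (fun i => (hI i).1) hx0 hx0'⟩
  · refine oneLayer_eq_activeToward W1 b1 W2 b2 hu0 (fun i hi => ?_) hx0 hside
      fun i hi => hstable x hx i (Finset.mem_compl.2 hi)
    obtain ⟨c, -, hw, hb⟩ := (hI i).1 hi
    exact ⟨c, hw, hb⟩
  · refine oneLayer_eq_activeToward W1 b1 W2 b2 (β := -β) (neg_ne_zero.2 hu0) (fun i hi => ?_)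
      (by rw [sInner_neg_left]; linarith) (by rw [sInner_neg_left]; linarith)
      fun i hi => hstable x hx i (Finset.mem_compl.2 hi)
    obtain ⟨c, -, hw, hb⟩ := (hI i).1 hi
    exact ⟨-c, fun j => by simp [hw j], by rw [hb]; ring⟩

end ReLUNet
end

section
/- Let u in R^d be nonzero, beta in R, and let B ⊆ R^d be an open ball meeting the hyperplane {x : <u,x> + beta = 0}. Suppose f : R^d -> R^m satisfies f(x) = A_1 x + c_1 for all x in B with <u,x> + beta >= 0 and f(x) = A_2 x + c_2 for all x in B with <u,x> + beta <= 0, where A_1, A_2 in R^{m x d} and c_1, c_2 in R^m. Then there exists v in R^m such that A_1 - A_2 = v u^T and c_1 - c_2 = beta v. -/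
namespace ReLUNet

open scoped BigOperators symmDiff

lemma euclNorm_eq_norm {d : ℕ} (w : Fin d → ℝ) :
    euclNorm w = ‖(WithLp.equiv 2 (Fin d → ℝ)).symm w‖ := by
  rw [EuclideanSpace.norm_eq]
  simp [euclNorm, sq_abs]

lemma euclNorm_nonneg {d : ℕ} (w : Fin d → ℝ) : 0 ≤ euclNorm w :=
  Real.sqrt_nonneg _

lemma euclNorm_add_le {d : ℕ} (a b : Fin d → ℝ) :
    euclNorm (fun j => a j + b j) ≤ euclNorm a + euclNorm b := by
  rw [euclNorm_eq_norm, euclNorm_eq_norm, euclNorm_eq_norm]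
  exact norm_add_le ((WithLp.equiv 2 (Fin d → ℝ)).symm a)
    ((WithLp.equiv 2 (Fin d → ℝ)).symm b)

lemma euclNorm_smul {d : ℕ} (t : ℝ) (w : Fin d → ℝ) :
    euclNorm (fun j => t * w j) = |t| * euclNorm w := by
  rw [euclNorm_eq_norm, euclNorm_eq_norm]
  have : (WithLp.equiv 2 (Fin d → ℝ)).symm (fun j => t * w j)
      = t • (WithLp.equiv 2 (Fin d → ℝ)).symm w := rfl
  rw [this, norm_smul, Real.norm_eq_abs]

/-- **Rank-one jump across a hyperplane.**
If `f` is affine on each side of the hyperplane `⟨u,·⟩ + β = 0` inside an open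
(Euclidean) ball meeting that hyperplane, then the difference of the two affine
pieces is a rank-one map: `A₁ - A₂ = v uᵀ` and `c₁ - c₂ = β v` for some `v`. -/
theorem affine_jump_rank_one (d m : ℕ)
    (u : Fin d → ℝ) (hu : u ≠ 0) (β : ℝ)
    (x0 : Fin d → ℝ) (r : ℝ) (hr : 0 < r)
    (hmeet : ∃ x, euclNorm (fun j => x j - x0 j) < r ∧ sInner u x + β = 0)
    (f : (Fin d → ℝ) → Fin m → ℝ)
    (A1 A2 : Fin m → Fin d → ℝ) (c1 c2 : Fin m → ℝ)
    (h1 : ∀ x, euclNorm (fun j => x j - x0 j) < r → 0 ≤ sInner u x + β →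
      ∀ p, f x p = (∑ j, A1 p j * x j) + c1 p)
    (h2 : ∀ x, euclNorm (fun j => x j - x0 j) < r → sInner u x + β ≤ 0 →
      ∀ p, f x p = (∑ j, A2 p j * x j) + c2 p) :
    ∃ v : Fin m → ℝ,
      (∀ p j, A1 p j - A2 p j = v p * u j) ∧ (∀ p, c1 p - c2 p = β * v p) := by
  obtain ⟨xs, hxs, hxsH⟩ := hmeet
  set D : Fin m → Fin d → ℝ := fun p j => A1 p j - A2 p j with hD
  -- the difference vanishes on the hyperplane inside the ball
  have hg : ∀ x, euclNorm (fun j => x j - x0 j) < r → sInner u x + β = 0 →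
      ∀ p, (∑ j, D p j * x j) + (c1 p - c2 p) = 0 := by
    intro x hx hH p
    have e1 := h1 x hx (le_of_eq hH.symm) p
    have e2 := h2 x hx (le_of_eq hH) p
    have hsum : ∑ j, D p j * x j = (∑ j, A1 p j * x j) - ∑ j, A2 p j * x j := by
      rw [← Finset.sum_sub_distrib]
      exact Finset.sum_congr rfl fun j _ => by rw [hD]; ring
    rw [hsum]
    have := e1.symm.trans e2
    linarith
  -- orthogonality: D p ⟂ every w ⟂ u
  have key : ∀ w : Fin d → ℝ, sInner u w = 0 → ∀ p, ∑ j, D p j * w j = 0 := by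
    intro w hw p
    set δ := r - euclNorm (fun j => xs j - x0 j) with hδ
    have hδpos : 0 < δ := by simp [hδ]; linarith
    have hwn : (0:ℝ) ≤ euclNorm w := euclNorm_nonneg w
    set t := δ / (euclNorm w + 1) with ht
    have htpos : 0 < t := div_pos hδpos (by linarith)
    set y : Fin d → ℝ := fun j => xs j + t * w j with hy
    have hyball : euclNorm (fun j => y j - x0 j) < r := by
      have h1' : euclNorm (fun j => y j - x0 j)
          ≤ euclNorm (fun j => xs j - x0 j) + euclNorm (fun j => t * w j) := by
        have := euclNorm_add_le (fun j => xs j - x0 j) (fun j => t * w j)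
        have he : (fun j => y j - x0 j) = fun j => (xs j - x0 j) + t * w j := by
          funext j; simp [hy]; ring
        rw [he]; exact this
      have h2' : euclNorm (fun j => t * w j) < δ := by
        rw [euclNorm_smul, abs_of_pos htpos, ht]
        rw [div_mul_eq_mul_div, div_lt_iff₀ (by linarith : (0:ℝ) < euclNorm w + 1)]
        nlinarith
      linarith
    have hyH : sInner u y + β = 0 := by
      have : sInner u y = sInner u xs + t * sInner u w := by
        simp only [sInner, hy, Finset.mul_sum, ← Finset.sum_add_distrib]
        exact Finset.sum_congr rfl fun j _ => by ring
      rw [this, hw]; linarith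
    have e1 := hg y hyball hyH p
    have e2 := hg xs hxs hxsH p
    have hsum : ∑ j, D p j * y j = (∑ j, D p j * xs j) + t * ∑ j, D p j * w j := by
      simp only [hy, Finset.mul_sum, ← Finset.sum_add_distrib]
      exact Finset.sum_congr rfl fun j _ => by ring
    rw [hsum] at e1
    have : t * ∑ j, D p j * w j = 0 := by linarith
    exact (mul_eq_zero.mp this).resolve_left htpos.ne'
  -- |u|² > 0
  have hS : 0 < sInner u u := by
    obtain ⟨j0, hj0⟩ : ∃ j, u j ≠ 0 := by
      by_contra h; push_neg at h; exact hu (funext h)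
    apply Finset.sum_pos' (fun j _ => mul_self_nonneg _)
    exact ⟨j0, Finset.mem_univ _, mul_self_pos.mpr hj0⟩
  refine ⟨fun p => (∑ j, D p j * u j) / sInner u u, ?_, ?_⟩
  · intro p j
    set v := (∑ j, D p j * u j) / sInner u u with hv
    set w : Fin d → ℝ := fun j => D p j - v * u j with hw
    have hwu : sInner u w = 0 := by
      simp only [sInner, hw, mul_sub, Finset.sum_sub_distrib]
      have : ∑ j, u j * (v * u j) = v * sInner u u := by
        rw [sInner, Finset.mul_sum]; exact Finset.sum_congr rfl fun j _ => by ring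
      rw [this, hv, div_mul_cancel₀ _ hS.ne']
      have : ∑ j, u j * D p j = ∑ j, D p j * u j :=
        Finset.sum_congr rfl fun j _ => mul_comm _ _
      rw [this, sub_self]
    have hDw := key w hwu p
    have hww : ∑ j, w j * w j = 0 := by
      have expand : ∑ j, w j * w j = (∑ j, D p j * w j) - v * ∑ j, u j * w j := by
        simp only [hw, sub_mul, Finset.sum_sub_distrib, Finset.mul_sum]
        congr 1
        exact Finset.sum_congr rfl fun j _ => by ring
      rw [expand, hDw]
      have : ∑ j, u j * w j = 0 := hwu
      rw [this]; ring
    have hwj : w j = 0 := by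
      have := (Finset.sum_eq_zero_iff_of_nonneg
        (fun j _ => mul_self_nonneg (w j))).mp hww j (Finset.mem_univ j)
      nlinarith [this]
    have : D p j = v * u j := by
      have := hwj; simp [hw] at this; linarith
    simpa [hD] using this
  · intro p
    set v := (∑ j, D p j * u j) / sInner u u with hv
    have e2 := hg xs hxs hxsH p
    have hDx : ∑ j, D p j * xs j = v * sInner u xs := by
      have hrow : ∀ j, D p j = v * u j := by
        intro j
        set w : Fin d → ℝ := fun j => D p j - v * u j with hw
        have hwu : sInner u w = 0 := by
          simp only [sInner, hw, mul_sub, Finset.sum_sub_distrib]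
          have h3 : ∑ j, u j * (v * u j) = v * sInner u u := by
            rw [sInner, Finset.mul_sum]; exact Finset.sum_congr rfl fun j _ => by ring
          rw [h3, hv, div_mul_cancel₀ _ hS.ne']
          have : ∑ j, u j * D p j = ∑ j, D p j * u j :=
            Finset.sum_congr rfl fun j _ => mul_comm _ _
          rw [this, sub_self]
        have hDw := key w hwu p
        have hww : ∑ j, w j * w j = 0 := by
          have expand : ∑ j, w j * w j = (∑ j, D p j * w j) - v * ∑ j, u j * w j := by
            simp only [hw, sub_mul, Finset.sum_sub_distrib, Finset.mul_sum]
            congr 1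
            exact Finset.sum_congr rfl fun j _ => by ring
          rw [expand, hDw]
          have : ∑ j, u j * w j = 0 := hwu
          rw [this]; ring
        have hwj := (Finset.sum_eq_zero_iff_of_nonneg
          (fun j _ => mul_self_nonneg (w j))).mp hww j (Finset.mem_univ j)
        have : w j = 0 := by nlinarith [hwj]
        simp [hw] at this; linarith
      rw [sInner, Finset.mul_sum]
      exact Finset.sum_congr rfl fun j _ => by rw [hrow j]; ring
    have hux : sInner u xs = -β := by linarith
    rw [hDx, hux] at e2
    linarith

end ReLUNet
end

section
/- Let P ⊆ R^d be a polytope with nonempty interior. Let f(x) = W^(2) ReLU(W^(1) x + b^(1)) + b^(2) and g(x) = V^(2) ReLU(V^(1) x + c^(1)) + c^(2) be one-hidden-layer ReLU networks from R^d to R^m, each with n hidden neurons. Let H_1, ..., H_n be pairwise distinct hyperplanes, each meeting the interior of P, with H_i = {x : <W^(1)_i, x> + b^(1)_i = 0}, and assume that the set of breakpoints of f in int(P) and the set of breakpoints of g in int(P) both equal (H_1 ∪ ... ∪ H_n) ∩ int(P). If there exist A in R^{m x d} and c in R^m with f(x) - g(x) = A x + c for all x in P, then there exists alpha in {-1, 0,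 1}^n such that A = sum_{i=1}^n alpha_i * W^(2)_{:,i} W^(1)_i. -/
namespace ReLUNet

open scoped BigOperators symmDiff

/-!
Every point of `Hᵢ ∩ int P` is a breakpoint of `g`, while a one-layer network is affine near
any point off the hyperplanes of its neurons. A point of `Hᵢ ∩ int P` off every hyperplane of
`g` that does not contain `Hᵢ` therefore forces some neuron `τ i` of `g` to have hyperplane `Hᵢ`,
i.e. `(V1 (τ i), c1 (τ i)) = λᵢ (W1 i, b1 i)` with `λᵢ ≠ 0`, and `τ` is a permutation.
Since `max (λ t) 0 = |λ| max t 0 + min λ 0 * t`, this writes `f - g` as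
`∑ᵢ (W2ᵢ - |λᵢ| V2_{τ i}) max tᵢ 0` plus an affine map, where `tᵢ = ⟨W1 i, ·⟩ + b1 i`.
Near a generic point of `Hᵢ` only the `i`-th ReLU has a kink, so affineness of `f - g` on
`int P` kills every coefficient, and what is left is `A = ∑_{λᵢ < 0} W2ᵢ W1ᵢ`.
-/

open Filter Topology

lemma tendsto_add_smul {E : Type*} [AddCommGroup E] [Module ℝ E] [TopologicalSpace E]
    [IsTopologicalAddGroup E] [ContinuousSMul ℝ E] (x v : E) :
    Tendsto (fun s : ℝ => x + s • v) (𝓝 0) (𝓝 x) :=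
  Continuous.tendsto' (by fun_prop) 0 x (by simp)

section Hyperplane

variable {d : ℕ}

lemma mem_hyp {w x : Fin d → ℝ} {β : ℝ} : x ∈ Hyp w β ↔ w ⬝ᵥ x + β = 0 := Iff.rfl

lemma dotProduct_self_pos {ι : Type*} [Fintype ι] {w : ι → ℝ} (hw : w ≠ 0) : 0 < w ⬝ᵥ w := by
  simpa using Matrix.dotProduct_star_self_pos_iff.2 hw

lemma isClosed_hyp (w : Fin d → ℝ) (β : ℝ) : IsClosed (Hyp w β) :=
  isClosed_eq (f := fun x => w ⬝ᵥ x + β) (by fun_prop) continuous_const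

lemma convex_hyp (w : Fin d → ℝ) (β : ℝ) : Convex ℝ (Hyp w β) := by
  intro x hx y hy a b _ _ hab
  simp only [mem_hyp, dotProduct_add, dotProduct_smul, smul_eq_mul] at hx hy ⊢
  linear_combination a * hx + b * hy - β * hab

lemma hyp_smul (w : Fin d → ℝ) (β : ℝ) {lam : ℝ} (hlam : lam ≠ 0) :
    Hyp (lam • w) (lam * β) = Hyp w β := by
  ext x
  simp only [mem_hyp, smul_dotProduct, smul_eq_mul, ← mul_add, mul_eq_zero, hlam, false_or]

lemma exists_smul_of_hyp_subset {w w' : Fin d → ℝ} {β β' : ℝ} (hw : w ≠ 0)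
    (h : Hyp w β ⊆ Hyp w' β') : ∃ lam : ℝ, w' = lam • w ∧ β' = lam * β := by
  have hq := (dotProduct_self_pos hw).ne'
  set x₀ : Fin d → ℝ := (-β / (w ⬝ᵥ w)) • w
  have hx₀ : w ⬝ᵥ x₀ = -β := by
    simp only [x₀, dotProduct_smul, smul_eq_mul]; field_simp
  have hx₀' : w' ⬝ᵥ x₀ + β' = 0 := h (by rw [mem_hyp, hx₀]; ring)
  have hker : ∀ v, w ⬝ᵥ v = 0 → w' ⬝ᵥ v = 0 := fun v hv => by
    have : w' ⬝ᵥ (x₀ + v) + β' = 0 := h (by rw [mem_hyp, dotProduct_add, hv, hx₀]; ring)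
    rw [dotProduct_add] at this
    linarith
  set lam := (w ⬝ᵥ w') / (w ⬝ᵥ w)
  have hv : w ⬝ᵥ (w' - lam • w) = 0 := by
    rw [dotProduct_sub, dotProduct_smul, smul_eq_mul, div_mul_cancel₀ _ hq, dotProduct_comm,
      sub_self]
  -- `w' - lam • w` is orthogonal to both `w` and `w'`, hence to itself
  have hw' : w' = lam • w := by
    refine sub_eq_zero.1 (dotProduct_self_eq_zero.1 ?_)
    rw [sub_dotProduct, hker _ hv, smul_dotProduct, hv, smul_zero, sub_zero]
  refine ⟨lam, hw', ?_⟩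
  rw [hw', smul_dotProduct, hx₀, smul_eq_mul] at hx₀'
  linarith

lemma hyp_eq_of_subset {w w' : Fin d → ℝ} {β β' : ℝ} (hw : w ≠ 0) (hw' : w' ≠ 0)
    (h : Hyp w β ⊆ Hyp w' β') : Hyp w' β' = Hyp w β := by
  obtain ⟨lam, rfl, rfl⟩ := exists_smul_of_hyp_subset hw h
  exact hyp_smul w β (left_ne_zero_of_smul hw')

lemma subset_closure_diff_hyp {S G : Set (Fin d → ℝ)} (hS : Convex ℝ S) (hG : IsOpen G)
    {w z : Fin d → ℝ} {β : ℝ} (hzS : z ∈ S) (hz : z ∉ Hyp w β) :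
    S ∩ G ⊆ closure ((S ∩ G) \ Hyp w β) := by
  rintro y ⟨hyS, hyG⟩
  by_cases hy : y ∈ Hyp w β
  swap
  · exact subset_closure ⟨⟨hyS, hyG⟩, hy⟩
  have hline := (tendsto_add_smul y (z - y)).mono_left (nhdsWithin_le_nhds (s := Set.Ioi 0))
  refine mem_closure_of_tendsto hline ?_
  filter_upwards [hline.eventually (hG.mem_nhds hyG), Ioo_mem_nhdsGT one_pos] with s hsG hs
  refine ⟨⟨hS.add_smul_sub_mem hyS hzS ⟨hs.1.le, hs.2.le⟩, hsG⟩, fun hsw => ?_⟩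
  rw [mem_hyp] at hy hz hsw
  rw [dotProduct_add, dotProduct_smul, dotProduct_sub, smul_eq_mul] at hsw
  exact hz ((mul_eq_zero.1 (show s * (w ⬝ᵥ z + β) = 0 by
    linear_combination hsw - (1 - s) * hy)).resolve_left hs.1.ne')

lemma subset_closure_diff_biUnion_hyp {ι : Type*} {S : Set (Fin d → ℝ)} (hS : Convex ℝ S)
    {L : ι → Fin d → ℝ} {r : ι → ℝ} (t : Finset ι)
    (ht : ∀ k ∈ t, ∃ z ∈ S, z ∉ Hyp (L k) (r k)) :
    S ⊆ closure (S \ ⋃ j ∈ t, Hyp (L j) (r j)) := by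
  classical
  induction t using Finset.induction_on with
  | empty => simpa using subset_closure
  | insert k t _ ih =>
    obtain ⟨z, hzS, hz⟩ := ht k (Finset.mem_insert_self k t)
    have hopen : IsOpen (⋃ j ∈ t, Hyp (L j) (r j))ᶜ :=
      (isClosed_biUnion_finset fun j _ => isClosed_hyp (L j) (r j)).isOpen_compl
    calc S ⊆ closure (S \ ⋃ j ∈ t, Hyp (L j) (r j)) :=
          ih fun k hk => ht k (Finset.mem_insert_of_mem hk)
      _ ⊆ closure (closure ((S ∩ (⋃ j ∈ t, Hyp (L j) (r j))ᶜ) \ Hyp (L k) (r k))) := by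
          rw [Set.sdiff_eq]; exact closure_mono (subset_closure_diff_hyp hS hopen hzS hz)
      _ = closure (S \ ⋃ j ∈ insert k t, Hyp (L j) (r j)) := by
          rw [closure_closure]; congr 1; ext x; simp; tauto

lemma exists_mem_inter_forall_notMem_hyp {ι : Type*} {S U : Set (Fin d → ℝ)}
    (hS : Convex ℝ S) (hU : IsOpen U) (hSU : (S ∩ U).Nonempty)
    {L : ι → Fin d → ℝ} {r : ι → ℝ} (t : Finset ι)
    (ht : ∀ k ∈ t, ∃ z ∈ S, z ∉ Hyp (L k) (r k)) :
    ∃ y ∈ S ∩ U, ∀ k ∈ t, y ∉ Hyp (L k) (r k) := by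
  obtain ⟨x, hxS, hxU⟩ := hSU
  obtain ⟨y, hyU, hyS, hy⟩ := mem_closure_iff_nhds.1 (subset_closure_diff_biUnion_hyp hS t ht hxS)
    U (hU.mem_nhds hxU)
  exact ⟨y, ⟨hyS, hyU⟩, by simpa using hy⟩

end Hyperplane

section EventuallyAffine

variable {d : ℕ}

def EventuallyAffine (l : Filter (Fin d → ℝ)) (φ : (Fin d → ℝ) → ℝ) : Prop :=
  ∃ (a : Fin d → ℝ) (c : ℝ), ∀ᶠ x in l, φ x = a ⬝ᵥ x + c

variable {l l' : Filter (Fin d → ℝ)} {φ ψ : (Fin d → ℝ) → ℝ}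

namespace EventuallyAffine

lemma mono (h : EventuallyAffine l φ) (hl : l' ≤ l) : EventuallyAffine l' φ :=
  let ⟨a, c, h⟩ := h; ⟨a, c, h.filter_mono hl⟩

lemma sub (hφ : EventuallyAffine l φ) (hψ : EventuallyAffine l ψ) :
    EventuallyAffine l fun x => φ x - ψ x := by
  obtain ⟨a, c, hφ⟩ := hφ
  obtain ⟨a', c', hψ⟩ := hψ
  refine ⟨a - a', c - c', ?_⟩
  filter_upwards [hφ, hψ] with x hφx hψx
  rw [hφx, hψx, sub_dotProduct]; ring

lemma add_const (h : EventuallyAffine l φ) (c' : ℝ) : EventuallyAffine l fun x => φ x + c' :=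
  let ⟨a, c, h⟩ := h; ⟨a, c + c', h.mono fun x hx => by simp only [hx]; ring⟩

lemma const_mul (h : EventuallyAffine l φ) (u : ℝ) : EventuallyAffine l fun x => u * φ x := by
  obtain ⟨a, c, h⟩ := h
  exact ⟨u • a, u * c, h.mono fun x hx => by simp only [hx, smul_dotProduct, smul_eq_mul]; ring⟩

end EventuallyAffine

lemma eventuallyAffine_sum {ι : Type*} (s : Finset ι) {φ : ι → (Fin d → ℝ) → ℝ}
    (h : ∀ i ∈ s, EventuallyAffine l (φ i)) : EventuallyAffine l fun x => ∑ i ∈ s, φ i x := by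
  choose! a c h using h
  refine ⟨∑ i ∈ s, a i, ∑ i ∈ s, c i, ?_⟩
  filter_upwards [(eventually_all_finset s).2 h] with x hx
  rw [Finset.sum_congr rfl hx, Finset.sum_add_distrib, sum_dotProduct]

lemma eventuallyAffine_relu {w x₀ : Fin d → ℝ} {β : ℝ} (h : w = 0 ∨ w ⬝ᵥ x₀ + β ≠ 0) :
    EventuallyAffine (𝓝 x₀) fun x => max (w ⬝ᵥ x + β) 0 := by
  have hcont : ContinuousAt (fun x => w ⬝ᵥ x + β) x₀ := by fun_prop
  rcases h with rfl | h
  · exact ⟨0, max β 0, .of_forall fun x => by simp⟩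
  rcases h.lt_or_gt with hneg | hpos
  · exact ⟨0, 0, (hcont.eventually_lt continuousAt_const hneg).mono fun x hx => by
      simp [max_eq_right hx.le]⟩
  · exact ⟨w, β, (continuousAt_const.eventually_lt hcont hpos).mono fun x hx =>
      max_eq_left hx.le⟩

lemma eq_zero_of_eventuallyAffine_mul_relu {w x₀ : Fin d → ℝ} {β u : ℝ} (hw : w ≠ 0)
    (hx₀ : w ⬝ᵥ x₀ + β = 0) (h : EventuallyAffine (𝓝 x₀) fun x => u * max (w ⬝ᵥ x + β) 0) :
    u = 0 := by
  obtain ⟨a, c, h⟩ := h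
  obtain ⟨ε, hε, hline⟩ := Metric.eventually_nhds_iff.1 ((tendsto_add_smul x₀ w).eventually h)
  have hq := dotProduct_self_pos hw
  have key : ∀ s : ℝ, |s| < ε →
      u * max (s * (w ⬝ᵥ w)) 0 = (a ⬝ᵥ x₀ + c) + s * (a ⬝ᵥ w) := fun s hs => by
    have := @hline s (by simpa using hs)
    simp only [dotProduct_add, dotProduct_smul, smul_eq_mul] at this
    rwa [show w ⬝ᵥ x₀ + s * w ⬝ᵥ w + β = s * w ⬝ᵥ w by linarith, add_right_comm] at this
  have hpos := key (ε / 2) (by rw [abs_of_pos (by positivity)]; linarith)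
  have hneg := key (-(ε / 2)) (by rw [abs_neg, abs_of_pos (by positivity)]; linarith)
  have hzero := key 0 (by simpa using hε)
  rw [max_eq_left (by positivity)] at hpos
  rw [max_eq_right (by nlinarith)] at hneg
  simp only [zero_mul, max_self, mul_zero] at hzero
  -- the second difference at `s = 0` vanishes on the affine side only
  have : u * (ε / 2 * (w ⬝ᵥ w)) = 0 := by linarith
  simpa [hε.ne', hq.ne'] using this

lemma eq_of_eventually_dotProduct_add_eq {x₀ a a' : Fin d → ℝ} {c c' : ℝ}
    (h : ∀ᶠ x in 𝓝 x₀, a ⬝ᵥ x + c = a' ⬝ᵥ x + c') : a = a' := by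
  obtain ⟨ε, hε, hline⟩ :=
    Metric.eventually_nhds_iff.1 ((tendsto_add_smul x₀ (a - a')).eventually h)
  have h₀ := @hline 0 (by simpa using hε)
  have h₁ := @hline (ε / 2) (by rw [Real.dist_0_eq_abs, abs_of_pos (by positivity)]; linarith)
  simp only [dotProduct_add, dotProduct_smul, smul_eq_mul, zero_smul, add_zero] at h₀ h₁
  have : ε / 2 * ((a - a') ⬝ᵥ (a - a')) = 0 := by
    rw [sub_dotProduct]; linear_combination h₁ - h₀
  rw [← sub_eq_zero, ← dotProduct_self_eq_zero]
  simpa [hε.ne'] using this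

lemma notMem_breakpoints_of_eventuallyAffine {m : ℕ} {F : (Fin d → ℝ) → Fin m → ℝ}
    {x : Fin d → ℝ} (h : ∀ p, EventuallyAffine (𝓝 x) (F · p)) : x ∉ Breakpoints F := by
  choose a c h using h
  obtain ⟨U, hU, hUo, hxU⟩ := eventually_nhds_iff.1 (eventually_all.2 h)
  exact fun hx => hx ⟨U, hUo, hxU, a, c, hU⟩

end EventuallyAffine

section Network

variable {d n m : ℕ}

lemma oneLayer_apply (W1 : Fin n → Fin d → ℝ) (b1 : Fin n → ℝ) (W2 : Fin m → Fin n → ℝ)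
    (b2 : Fin m → ℝ) (x : Fin d → ℝ) (p : Fin m) :
    oneLayer W1 b1 W2 b2 x p = ∑ i, W2 p i * max (W1 i ⬝ᵥ x + b1 i) 0 + b2 p := rfl

lemma eventuallyAffine_oneLayer {W1 : Fin n → Fin d → ℝ} {b1 : Fin n → ℝ} {x₀ : Fin d → ℝ}
    (h : ∀ k, W1 k = 0 ∨ W1 k ⬝ᵥ x₀ + b1 k ≠ 0) (W2 : Fin m → Fin n → ℝ) (b2 : Fin m → ℝ)
    (p : Fin m) : EventuallyAffine (𝓝 x₀) (oneLayer W1 b1 W2 b2 · p) :=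
  (eventuallyAffine_sum _ fun k _ => (eventuallyAffine_relu (h k)).const_mul (W2 p k)).add_const _

lemma exists_smul_eq_of_hyp_inter_subset_breakpoints {w : Fin d → ℝ} {β : ℝ} (hw : w ≠ 0)
    {U : Set (Fin d → ℝ)} (hU : IsOpen U) (hmeet : (Hyp w β ∩ U).Nonempty)
    {V1 : Fin n → Fin d → ℝ} {c1 : Fin n → ℝ} {V2 : Fin m → Fin n → ℝ} {c2 : Fin m → ℝ}
    (hbp : Hyp w β ∩ U ⊆ Breakpoints (oneLayer V1 c1 V2 c2)) :
    ∃ k, ∃ lam : ℝ, lam ≠ 0 ∧ V1 k = lam • w ∧ c1 k = lam * β := by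
  classical
  by_contra hnot
  have hoff : ∀ k ∈ Finset.univ.filter (V1 · ≠ 0), ∃ z ∈ Hyp w β, z ∉ Hyp (V1 k) (c1 k) := by
    intro k hk
    by_contra! hsub
    obtain ⟨lam, hV, hc⟩ := exists_smul_of_hyp_subset hw hsub
    refine hnot ⟨k, lam, ?_, hV, hc⟩
    rintro rfl
    simp_all
  obtain ⟨y, hy, hyoff⟩ := exists_mem_inter_forall_notMem_hyp (convex_hyp w β) hU hmeet _ hoff
  refine notMem_breakpoints_of_eventuallyAffine (eventuallyAffine_oneLayer (fun k => ?_) V2 c2)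
    (hbp hy)
  by_cases hk : V1 k = 0
  · exact .inl hk
  · exact .inr (hyoff k (by simpa using hk))

lemma eq_zero_of_eventuallyAffine_sum_mul_relu {U : Set (Fin d → ℝ)} (hU : IsOpen U)
    {W : Fin n → Fin d → ℝ} {b : Fin n → ℝ} (hW : ∀ i, W i ≠ 0)
    (hdist : ∀ i j, i ≠ j → Hyp (W i) (b i) ≠ Hyp (W j) (b j))
    (hmeet : ∀ i, (Hyp (W i) (b i) ∩ U).Nonempty) {u : Fin n → ℝ}
    (h : EventuallyAffine (𝓟 U) fun x => ∑ i, u i * max (W i ⬝ᵥ x + b i) 0) (i : Fin n) :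
    u i = 0 := by
  classical
  have hoff : ∀ j ∈ Finset.univ.erase i, ∃ z ∈ Hyp (W i) (b i), z ∉ Hyp (W j) (b j) := by
    intro j hj
    by_contra! hsub
    exact hdist j i (Finset.ne_of_mem_erase hj) (hyp_eq_of_subset (hW i) (hW j) hsub)
  obtain ⟨x, ⟨hxi, hxU⟩, hxoff⟩ :=
    exists_mem_inter_forall_notMem_hyp (convex_hyp _ _) hU (hmeet i) _ hoff
  have hrest : EventuallyAffine (𝓝 x) fun y => ∑ j ∈ Finset.univ.erase i,
      u j * max (W j ⬝ᵥ y + b j) 0 :=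
    eventuallyAffine_sum _ fun j hj => (eventuallyAffine_relu (.inr (hxoff j hj))).const_mul _
  refine eq_zero_of_eventuallyAffine_mul_relu (hW i) hxi ?_
  convert (h.mono (le_principal_iff.2 (hU.mem_nhds hxU))).sub hrest using 2 with y
  rw [← Finset.add_sum_erase _ _ (Finset.mem_univ i), add_sub_cancel_right]

lemma eq_zero_and_eq_of_sum_mul_relu_add_eqOn {U : Set (Fin d → ℝ)} (hU : IsOpen U)
    (hUne : U.Nonempty) {W : Fin n → Fin d → ℝ} {b : Fin n → ℝ} (hW : ∀ i, W i ≠ 0)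
    (hdist : ∀ i j, i ≠ j → Hyp (W i) (b i) ≠ Hyp (W j) (b j))
    (hmeet : ∀ i, (Hyp (W i) (b i) ∩ U).Nonempty) {u : Fin n → ℝ} {a a' : Fin d → ℝ}
    {c c' : ℝ} (h : ∀ x ∈ U, ∑ i, u i * max (W i ⬝ᵥ x + b i) 0 + (a ⬝ᵥ x + c) = a' ⬝ᵥ x + c') :
    (∀ i, u i = 0) ∧ a = a' := by
  have hu : ∀ i, u i = 0 := eq_zero_of_eventuallyAffine_sum_mul_relu hU hW hdist hmeet
    ⟨a' - a, c' - c, eventually_principal.2 fun x hx => by rw [sub_dotProduct]; linarith [h x hx]⟩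
  obtain ⟨x₀, hx₀⟩ := hUne
  refine ⟨hu, eq_of_eventually_dotProduct_add_eq (x₀ := x₀) (c := c) (c' := c') ?_⟩
  filter_upwards [hU.mem_nhds hx₀] with x hx
  simpa [hu] using h x hx

lemma max_mul_zero (lam t : ℝ) : max (lam * t) 0 = |lam| * max t 0 + min lam 0 * t := by
  rcases le_total 0 lam with hl | hl <;> rcases le_total 0 t with ht | ht
  · simp [abs_of_nonneg hl, hl, ht, mul_nonneg hl ht]
  · simp [abs_of_nonneg hl, hl, ht, mul_nonpos_of_nonneg_of_nonpos hl ht]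
  · simp [abs_of_nonpos hl, hl, ht, mul_nonpos_of_nonpos_of_nonneg hl ht]
  · rw [max_eq_left (mul_nonneg_of_nonpos_of_nonpos hl ht), max_eq_right ht,
      min_eq_left hl]; ring

lemma oneLayer_sub_oneLayer_of_smul {W1 V1 : Fin n → Fin d → ℝ} {b1 c1 : Fin n → ℝ}
    {τ : Fin n → Fin n} (hτ : τ.Bijective) {lam : Fin n → ℝ}
    (hV1 : ∀ i, V1 (τ i) = lam i • W1 i) (hc1 : ∀ i, c1 (τ i) = lam i * b1 i)
    (W2 V2 : Fin m → Fin n → ℝ) (b2 c2 : Fin m → ℝ) (x : Fin d → ℝ) (p : Fin m) :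
    oneLayer W1 b1 W2 b2 x p - oneLayer V1 c1 V2 c2 x p =
      ∑ i, (W2 p i - |lam i| * V2 p (τ i)) * max (W1 i ⬝ᵥ x + b1 i) 0 +
        ((∑ i, (-(min (lam i) 0 * V2 p (τ i))) • W1 i) ⬝ᵥ x +
          (b2 p - c2 p - ∑ i, min (lam i) 0 * V2 p (τ i) * b1 i)) := by
  have key : ∑ i, (W2 p i * max (W1 i ⬝ᵥ x + b1 i) 0 -
        V2 p (τ i) * max (V1 (τ i) ⬝ᵥ x + c1 (τ i)) 0) =
      ∑ i, ((W2 p i - |lam i| * V2 p (τ i)) * max (W1 i ⬝ᵥ x + b1 i) 0 +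
        -(min (lam i) 0 * V2 p (τ i)) * (W1 i ⬝ᵥ x) - min (lam i) 0 * V2 p (τ i) * b1 i) :=
    Finset.sum_congr rfl fun i _ => by
      rw [hV1, hc1, smul_dotProduct, smul_eq_mul, ← mul_add, max_mul_zero]; ring
  rw [Finset.sum_sub_distrib, Finset.sum_sub_distrib, Finset.sum_add_distrib] at key
  rw [oneLayer_apply, oneLayer_apply, sum_dotProduct,
    ← hτ.sum_comp fun k => V2 p k * max (V1 k ⬝ᵥ x + c1 k) 0]
  simp only [smul_dotProduct, smul_eq_mul]
  linear_combination key

end Network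

theorem fixed_width_affine_difference_general (d m n : ℕ)
    (P : Set (Fin d → ℝ)) (hPint : (interior P).Nonempty)
    (W1 : Fin n → Fin d → ℝ) (b1 : Fin n → ℝ)
    (W2 : Fin m → Fin n → ℝ) (b2 : Fin m → ℝ)
    (V1 : Fin n → Fin d → ℝ) (c1 : Fin n → ℝ)
    (V2 : Fin m → Fin n → ℝ) (c2 : Fin m → ℝ)
    (hW1 : ∀ i, W1 i ≠ 0)
    (hdist : ∀ i j : Fin n, i ≠ j → Hyp (W1 i) (b1 i) ≠ Hyp (W1 j) (b1 j))
    (hmeet : ∀ i, (Hyp (W1 i) (b1 i) ∩ interior P).Nonempty)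
    (hbg : Breakpoints (oneLayer V1 c1 V2 c2) ∩ interior P =
      (⋃ i, Hyp (W1 i) (b1 i)) ∩ interior P)
    (A : Fin m → Fin d → ℝ) (c : Fin m → ℝ)
    (hAc : ∀ x ∈ P, ∀ p,
      oneLayer W1 b1 W2 b2 x p - oneLayer V1 c1 V2 c2 x p = (∑ j, A p j * x j) + c p) :
    ∃ α : Fin n → ℝ, (∀ i, α i = -1 ∨ α i = 0 ∨ α i = 1) ∧
      ∀ p j, A p j = ∑ i, α i * (W2 p i * W1 i j) := by
  choose τ lam hlam hV1 hc1 using fun i =>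
    exists_smul_eq_of_hyp_inter_subset_breakpoints (hW1 i) isOpen_interior (hmeet i)
      fun x hx => (hbg.symm.subset ⟨Set.mem_iUnion_of_mem i hx.1, hx.2⟩).1
  have hτ : τ.Bijective := Finite.injective_iff_bijective.1 fun i j hij => by
    by_contra hne
    refine hdist i j hne ?_
    rw [← hyp_smul (W1 i) (b1 i) (hlam i), ← hyp_smul (W1 j) (b1 j) (hlam j), ← hV1, ← hV1, ← hc1,
      ← hc1, hij]
  refine ⟨fun i => if lam i < 0 then 1 else 0, fun i => by dsimp only; split_ifs <;> simp,
    fun p => ?_⟩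
  obtain ⟨hu, hA⟩ :=
    eq_zero_and_eq_of_sum_mul_relu_add_eqOn isOpen_interior hPint hW1 hdist hmeet fun x hx =>
      (oneLayer_sub_oneLayer_of_smul hτ hV1 hc1 W2 V2 b2 c2 x p).symm.trans
        (hAc x (interior_subset hx) p)
  intro j
  rw [← hA]
  simp only [Finset.sum_apply, Pi.smul_apply, smul_eq_mul]
  refine Finset.sum_congr rfl fun i _ => ?_
  have hW2 : W2 p i = |lam i| * V2 p (τ i) := sub_eq_zero.1 (hu i)
  split_ifs with hneg
  · rw [hW2, abs_of_neg hneg, min_eq_left hneg.le]; ring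
  · rw [min_eq_right (not_lt.1 hneg)]; ring

/-- **Fixed-width affine difference (Lemma on shallow networks).**
Let `f` and `g` be one-hidden-layer networks with the same number `n` of hidden
neurons, whose breakpoints in the interior of a full-dimensional polytope `P`
are the same `n` pairwise distinct hyperplanes `H_i = {⟨W₁ᵢ,·⟩ + b₁ᵢ = 0}`, each
meeting the interior of `P`.  If `f - g` is affine on `P`, then its linear part
is `∑ i, αᵢ W₂_{:,i} W₁ᵢ` with `αᵢ ∈ {-1, 0, 1}`. -/
theorem fixed_width_affine_difference (d m n : ℕ)
    (P : Set (Fin d → ℝ)) (hP : IsPolytope P) (hPint : (interior P).Nonempty)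
    (W1 : Fin n → Fin d → ℝ) (b1 : Fin n → ℝ)
    (W2 : Fin m → Fin n → ℝ) (b2 : Fin m → ℝ)
    (V1 : Fin n → Fin d → ℝ) (c1 : Fin n → ℝ)
    (V2 : Fin m → Fin n → ℝ) (c2 : Fin m → ℝ)
    (hW1 : ∀ i, W1 i ≠ 0)
    (hdist : ∀ i j : Fin n, i ≠ j → Hyp (W1 i) (b1 i) ≠ Hyp (W1 j) (b1 j))
    (hmeet : ∀ i, (Hyp (W1 i) (b1 i) ∩ interior P).Nonempty)
    (hbf : Breakpoints (oneLayer W1 b1 W2 b2) ∩ interior P =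
      (⋃ i, Hyp (W1 i) (b1 i)) ∩ interior P)
    (hbg : Breakpoints (oneLayer V1 c1 V2 c2) ∩ interior P =
      (⋃ i, Hyp (W1 i) (b1 i)) ∩ interior P)
    (A : Fin m → Fin d → ℝ) (c : Fin m → ℝ)
    (hAc : ∀ x ∈ P, ∀ p,
      oneLayer W1 b1 W2 b2 x p - oneLayer V1 c1 V2 c2 x p = (∑ j, A p j * x j) + c p) :
    ∃ α : Fin n → ℝ, (∀ i, α i = -1 ∨ α i = 0 ∨ α i = 1) ∧
      ∀ p j, A p j = ∑ i, α i * (W2 p i * W1 i j) :=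
  fixed_width_affine_difference_general d m n P hPint W1 b1 W2 b2 V1 c1 V2 c2 hW1 hdist hmeet hbg A
    c hAc

end ReLUNet
end
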